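/- arXiv:2404.00873 — 7 statements merged into one kernel-verified Lean document; each statement's English description precedes it below -/
import Mathlib

section
/- Let n ≥ k ≥ 1 be integers. Every simple graph on n vertices that contains no path of length k (i.e., no path with k edges) as a subgraph has at most n(k−1)/2 edges. -/
set_option linter.unreachableTactic false
set_option linter.unnecessarySeqFocus false
set_option linter.unusedTactic false
set_option linter.unusedSectionVars false
set_option maxHeartbeats 1000000
open List Finset

section EG
open List

variable {V : Type*} {G : SimpleGraph V}

lemma rotation' {L : List V} {l i j : ℕ}
    (hC : L.Chain' G.Adj) (hN : L.Nodup)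
    (hlen : L.length = l + 1) (hil : i < l) (hji : j ≤ i)
    (hui : G.Adj (L[0]'(by omega)) (L[i+1]'(by omega)))
    (hvi : G.Adj (L[l]'(by omega)) (L[i]'(by omega)))
    {w : V} (hw : w ∉ L) (hwj : G.Adj w (L[j]'(by omega))) :
    ∃ M : List V, M.Chain' G.Adj ∧ M.Nodup ∧ M.length = l + 2 := by
  have hflip : (flip G.Adj) = G.Adj := by
    funext a b; exact propext (G.adj_comm b a)
  set A : List V := (L.take (j+1)).reverse with hA
  set B : List V := L.drop (i+1) with hB
  set seg : List V := (L.drop (j+1)).take (i-j) with hseg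
  set C : List V := seg.reverse with hCdef
  have hAlen : A.length = j + 1 := by simp [hA, hlen]; omega
  have hBlen : B.length = l - i := by simp [hB, hlen]
  have hseglen : seg.length = i - j := by simp [hseg, hlen]; omega
  have hClen : C.length = i - j := by simp [hCdef, hseglen]
  have hAne : A ≠ [] := by intro h; rw [h] at hAlen; simp at hAlen
  have hBne : B ≠ [] := by
    intro h; rw [h] at hBlen; simp at hBlen; omega
  -- getElem computations
  have hA_last : A.getLast hAne = L[0]'(by omega) := by
    rw [List.getLast_eq_getElem]
    simp only [hA]
    rw [List.getElem_reverse, List.getElem_take]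
    all_goals (first | rfl | (congr 1 <;> (simp [hlen] <;> omega)) | (congr 1 <;> simp [hlen]) | (simp [hlen] <;> omega))
  have hA_head : A.head hAne = L[j]'(by omega) := by
    rw [List.head_eq_getElem]
    simp only [hA]
    rw [List.getElem_reverse, List.getElem_take]
    all_goals (first | rfl | (congr 1 <;> (simp [hlen] <;> omega)) | (congr 1 <;> simp [hlen]) | (simp [hlen] <;> omega))
  have hB_head : B.head hBne = L[i+1]'(by omega) := by
    rw [List.head_eq_getElem]
    simp only [hB]
    rw [List.getElem_drop]
    all_goals (first | rfl | (congr 1 <;> (simp [hlen] <;> omega)) | (congr 1 <;> simp [hlen]) | (simp [hlen] <;> omega))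
  have hB_last : B.getLast hBne = L[l]'(by omega) := by
    rw [List.getLast_eq_getElem]
    simp only [hB]
    rw [List.getElem_drop]
    all_goals (first | rfl | (congr 1 <;> (simp [hlen] <;> omega)) | (congr 1 <;> simp [hlen]) | (simp [hlen] <;> omega))
  have hC_head : ∀ (hCne : C ≠ []), C.head hCne = L[i]'(by omega) := by
    intro hCne
    have hsegne : seg ≠ [] := by
      intro h; rw [hCdef, h] at hCne; simp at hCne
    have hij : i - j ≠ 0 := by
      intro h; rw [h] at hseglen; exact hsegne (List.eq_nil_of_length_eq_zero hseglen)
    rw [List.head_eq_getElem]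
    simp only [hCdef, hseg]
    rw [List.getElem_reverse, List.getElem_take, List.getElem_drop]
    all_goals (first | rfl | (congr 1 <;> (simp [hlen] <;> omega)) | (congr 1 <;> simp [hlen]) | (simp [hlen] <;> omega))
  have hA_chain : A.Chain' G.Adj := by
    rw [hA]; unfold List.Chain'; rw [List.isChain_reverse]; change List.IsChain (flip G.Adj) _; rw [hflip]; exact hC.take _
  have hB_chain : B.Chain' G.Adj := hC.drop _
  have hC_chain : C.Chain' G.Adj := by
    rw [hCdef]; unfold List.Chain'; rw [List.isChain_reverse]; change List.IsChain (flip G.Adj) _; rw [hflip]; exact (hC.drop _).take _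
  have h1 : List.Chain' G.Adj (A ++ B) := by
    refine hA_chain.append hB_chain ?_
    intro x hx y hy
    rw [List.getLast?_eq_getLast hAne] at hx
    rw [List.head?_eq_head hBne] at hy
    simp only [Option.mem_some_iff] at hx hy
    subst hx; subst hy
    rw [hA_last, hB_head]; exact hui
  have h2 : List.Chain' G.Adj (A ++ B ++ C) := by
    refine h1.append hC_chain ?_
    intro x hx y hy
    have hCne : C ≠ [] := by intro h; rw [h] at hy; simp at hy
    rw [List.head?_eq_head hCne] at hy
    rw [List.getLast?_append, List.getLast?_eq_getLast hBne] at hx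
    simp only [Option.or_some, Option.some_or, Option.mem_some_iff] at hx hy
    subst hx; subst hy
    rw [hB_last, hC_head]; exact hvi
  -- the new list
  refine ⟨w :: (A ++ B ++ C), ?_, ?_, ?_⟩
  · unfold List.Chain'; rw [List.isChain_cons]
    constructor
    · intro y hy
      have hABCne : (A ++ B ++ C).head? = some (A.head hAne) := by
        rw [List.append_assoc, List.head?_append, List.head?_eq_head hAne]
        rfl
      rw [hABCne] at hy
      simp only [Option.mem_some_iff] at hy
      subst hy; rw [hA_head]; exact hwj
    · exact h2
  · -- Nodup via perm with w :: L
    have hLdecomp : L.take (j+1) ++ (seg ++ B) = L := by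
      conv_rhs => rw [← List.take_append_drop (j+1) L]
      congr 1
      rw [hseg, hB]
      conv_rhs => rw [← List.take_append_drop (i-j) (L.drop (j+1))]
      congr 1
      rw [List.drop_drop]
      congr 1
      omega
    have hperm : (A ++ B ++ C).Perm L := by
      have p1 : (A ++ B ++ C).Perm (L.take (j+1) ++ B ++ seg) :=
        (((L.take (j+1)).reverse_perm.append (List.Perm.refl B)).append seg.reverse_perm)
      have p2 : (L.take (j+1) ++ B ++ seg).Perm (L.take (j+1) ++ (seg ++ B)) := by
        rw [List.append_assoc]
        exact List.Perm.append_left _ (List.perm_append_comm)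
      rw [hLdecomp] at p2
      exact p1.trans p2
    rw [List.nodup_cons]
    exact ⟨fun hmem => hw (hperm.mem_iff.mp hmem), hperm.nodup_iff.mpr hN⟩
  · simp only [List.length_cons, List.length_append, hAlen, hBlen, hClen]
    omega

lemma chain_rev {L : List V} (h : L.Chain' G.Adj) : L.reverse.Chain' G.Adj := by
  unfold List.Chain'; rw [List.isChain_reverse]; change List.IsChain (flip G.Adj) L
  have hflip : (flip G.Adj) = G.Adj := by funext a b; exact propext (G.adj_comm b a)
  rwa [hflip]

lemma key {V : Type*} [Fintype V] [DecidableEq V] (G : SimpleGraph V) [DecidableRel G.Adj]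
    (k : ℕ) (hk : 1 ≤ k)
    (hdeg : ∀ v, k ≤ 2 * G.degree v)
    (hconn : ∀ A : Finset V, A.Nonempty → Aᶜ.Nonempty → ∃ a ∈ A, ∃ b ∈ Aᶜ, G.Adj a b)
    (hcard : k < Fintype.card V) :
    ∃ L : List V, L.Chain' G.Adj ∧ L.Nodup ∧ L.length = k + 1 := by
  have hVne : Nonempty V := by
    rw [← Fintype.card_pos_iff]; omega
  obtain ⟨v0⟩ := hVne
  set P : Set ℕ := {m | ∃ L : List V, L.Chain' G.Adj ∧ L.Nodup ∧ L.length = m} with hP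
  have h1P : 1 ∈ P := ⟨[v0], by simp [List.Chain']⟩
  have hbdd : BddAbove P := by
    refine ⟨Fintype.card V, ?_⟩
    rintro p ⟨L, _, hN, hp⟩
    rw [← hp]; exact hN.length_le_card
  set m := sSup P with hm
  have hmem : m ∈ P := Nat.sSup_mem ⟨1, h1P⟩ hbdd
  have hmax : ∀ p ∈ P, p ≤ m := fun p hp => le_csSup hbdd hp
  have hm1 : 1 ≤ m := hmax 1 h1P
  -- main claim: m ≥ k + 1
  have hclaim : k + 1 ≤ m := by
    by_contra hmk'
    have hmk : m ≤ k := by omega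
    obtain ⟨L0, hC, hN, hL⟩ := hmem
    set l := m - 1 with hl
    have hlen : L0.length = l + 1 := by omega
    have hL0ne : L0 ≠ [] := by intro h; rw [h] at hL; simp at hL; omega
    -- head extension
    have hext : ∀ (L : List V) (_ : L.Chain' G.Adj) (_ : L.Nodup) (hlen' : L.length = l + 1)
        (x : V), G.Adj x (L[0]'(by omega)) → x ∈ L := by
      intro L hC' hN' hlen' x hadj
      by_contra hx
      have hchain : (x :: L).Chain' G.Adj := by
        unfold List.Chain'; rw [List.isChain_cons]
        refine ⟨?_, hC'⟩
        intro y hy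
        have hLne : L ≠ [] := by intro h; rw [h] at hlen'; simp at hlen'
        rw [List.head?_eq_head hLne] at hy
        simp only [Option.mem_some_iff] at hy
        subst hy
        rwa [List.head_eq_getElem]
      have : (l + 2 : ℕ) ∈ P := ⟨x :: L, hchain, by rw [List.nodup_cons]; exact ⟨hx, hN'⟩, by simp [hlen']⟩
      have := hmax _ this
      omega
    -- every neighbor of the head is on L0
    have hextu : ∀ x, G.Adj x (L0[0]'(by omega)) → x ∈ L0 := hext L0 hC hN hlen
    -- reverse getElem helper
    have hrev : ∀ (p : ℕ) (hp : p < l + 1),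
        (L0.reverse)[p]'(by simp [hlen] <;> omega) = L0[l - p]'(by omega) := by
      intro p hp
      rw [List.getElem_reverse]
      congr 1
      simp [hlen] <;> omega
    have hextv : ∀ x, G.Adj x (L0[l]'(by omega)) → x ∈ L0 := by
      intro x hadj
      have h0 : G.Adj x ((L0.reverse)[0]'(by simp [hlen] <;> omega)) := by
        rw [hrev 0 (by omega)]
        simpa using hadj
      have := hext L0.reverse (chain_rev hC) (by rwa [List.nodup_reverse])
        (by simp [hlen]) x h0
      rwa [List.mem_reverse] at this
    set u := L0[0]'(by omega) with hu
    set v := L0[l]'(by omega) with hv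
    -- m ≥ 2
    have hl1 : 1 ≤ l := by
      by_contra hc
      have hl0 : l = 0 := by omega
      have hm2 : m = 1 := by omega
      obtain ⟨a, ha⟩ := List.length_eq_one_iff.mp (by omega : L0.length = 1)
      have hdu : 1 ≤ G.degree u := by have := hdeg u; omega
      rw [← SimpleGraph.card_neighborFinset_eq_degree] at hdu
      obtain ⟨x, hx⟩ := Finset.card_pos.mp (show 0 < (G.neighborFinset u).card by omega)
      rw [SimpleGraph.mem_neighborFinset] at hx
      have hxL : x ∈ L0 := hextu x hx.symm
      have hu_mem : u ∈ L0 := by rw [hu]; exact List.getElem_mem _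
      rw [ha, List.mem_singleton] at hxL hu_mem
      rw [hu_mem, hxL] at hx
      exact G.loopless.irrefl a hx
    -- index sets
    have hgetD : ∀ (p : ℕ) (hp : p < l + 1), L0.getD p v0 = L0[p]'(by omega) := by
      intro p hp
      rw [List.getD_eq_getElem]
    set S := (Finset.range l).filter (fun p => G.Adj u (L0.getD (p+1) v0)) with hS
    set T := (Finset.range l).filter (fun p => G.Adj v (L0.getD p v0)) with hT
    have hidx : ∀ x ∈ L0, L0.idxOf x < l + 1 := by
      intro x hx
      have := List.idxOf_lt_length_iff.2 hx
      omega
    have hgetidx : ∀ (x : V) (hx : x ∈ L0), L0[L0.idxOf x]'(by rw [hlen]; exact hidx x hx) = x := by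
      intro x hx
      exact List.getElem_idxOf _
    have hScard : G.degree u ≤ S.card := by
      rw [← SimpleGraph.card_neighborFinset_eq_degree]
      apply Finset.card_le_card_of_injOn (fun x => L0.idxOf x - 1)
      · intro x hx
        simp only [Finset.mem_coe] at hx ⊢
        rw [SimpleGraph.mem_neighborFinset] at hx
        have hxL : x ∈ L0 := hextu x hx.symm
        have hilt := hidx x hxL
        have hne0 : L0.idxOf x ≠ 0 := by
          intro h0
          have : L0[L0.idxOf x]'(by rw [hlen]; exact hidx x hxL) = L0[0]'(by omega) := by congr 1
          rw [hgetidx x hxL] at this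
          rw [← hu] at this
          exact G.ne_of_adj hx this.symm
        rw [hS, Finset.mem_filter, Finset.mem_range]
        constructor
        · omega
        · have : L0.idxOf x - 1 + 1 = L0.idxOf x := by omega
          rw [this, hgetD _ hilt, hgetidx x hxL]
          exact hx
      · intro x hx y hy hxy
        rw [Finset.mem_coe, SimpleGraph.mem_neighborFinset] at hx hy
        have hxL : x ∈ L0 := hextu x hx.symm
        have hyL : y ∈ L0 := hextu y hy.symm
        have hne0x : L0.idxOf x ≠ 0 := by
          intro h0
          have : L0[L0.idxOf x]'(by rw [hlen]; exact hidx x hxL) = L0[0]'(by omega) := by congr 1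
          rw [hgetidx x hxL] at this
          rw [← hu] at this
          exact G.ne_of_adj hx this.symm
        have hne0y : L0.idxOf y ≠ 0 := by
          intro h0
          have : L0[L0.idxOf y]'(by rw [hlen]; exact hidx y hyL) = L0[0]'(by omega) := by congr 1
          rw [hgetidx y hyL] at this
          rw [← hu] at this
          exact G.ne_of_adj hy this.symm
        have hxy' : L0.idxOf x - 1 = L0.idxOf y - 1 := hxy
        have heq : L0.idxOf x = L0.idxOf y := by omega
        rw [← hgetidx x hxL, ← hgetidx y hyL]
        congr 1
    have hTcard : G.degree v ≤ T.card := by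
      rw [← SimpleGraph.card_neighborFinset_eq_degree]
      apply Finset.card_le_card_of_injOn (fun x => L0.idxOf x)
      · intro x hx
        simp only [Finset.mem_coe] at hx ⊢
        rw [SimpleGraph.mem_neighborFinset] at hx
        have hxL : x ∈ L0 := hextv x hx.symm
        have hilt := hidx x hxL
        have hnel : L0.idxOf x ≠ l := by
          intro h0
          have : L0[L0.idxOf x]'(by rw [hlen]; exact hidx x hxL) = L0[l]'(by omega) := by congr 1
          rw [hgetidx x hxL] at this
          rw [← hv] at this
          exact G.ne_of_adj hx this.symm
        rw [hT, Finset.mem_filter, Finset.mem_range]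
        refine ⟨by omega, ?_⟩
        rw [hgetD _ hilt, hgetidx x hxL]
        exact hx
      · intro x hx y hy hxy
        rw [Finset.mem_coe, SimpleGraph.mem_neighborFinset] at hx hy
        have hxL : x ∈ L0 := hextv x hx.symm
        have hyL : y ∈ L0 := hextv y hy.symm
        rw [← hgetidx x hxL, ← hgetidx y hyL]
        congr 1
    -- intersection nonempty
    have hST : (S ∩ T).Nonempty := by
      rw [← Finset.card_pos]
      have hun : (S ∪ T).card ≤ l := by
        have : S ∪ T ⊆ Finset.range l := by
          rw [hS, hT]
          exact Finset.union_subset (Finset.filter_subset _ _) (Finset.filter_subset _ _)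
        simpa using Finset.card_le_card this
      have hsum : k ≤ S.card + T.card := by
        have h1 := hdeg u
        have h2 := hdeg v
        omega
      have := Finset.card_union_add_card_inter S T
      omega
    obtain ⟨i, hi⟩ := hST
    rw [Finset.mem_inter, hS, hT, Finset.mem_filter, Finset.mem_filter, Finset.mem_range] at hi
    obtain ⟨⟨hil, hui0⟩, _, hvi0⟩ := hi
    rw [hgetD _ (by omega)] at hui0
    rw [hgetD _ (by omega)] at hvi0
    -- outside vertex
    have hA : (L0.toFinset : Finset V).Nonempty := ⟨u, by rw [List.mem_toFinset]; exact List.getElem_mem _⟩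
    have hAc : ((L0.toFinset)ᶜ : Finset V).Nonempty := by
      rw [← Finset.card_pos, Finset.card_compl, List.toFinset_card_of_nodup hN]
      omega
    obtain ⟨a, haA, w, hwA, haw⟩ := hconn L0.toFinset hA hAc
    rw [List.mem_toFinset] at haA
    rw [Finset.mem_compl, List.mem_toFinset] at hwA
    set j := L0.idxOf a with hj
    have hjlt : j < l + 1 := hidx a haA
    have hwj : G.Adj w (L0[j]'(by omega)) := by
      rw [hgetidx a haA]
      exact haw.symm
    rcases le_or_gt j i with hji | hij
    · obtain ⟨M, hMC, hMN, hML⟩ := rotation' hC hN hlen hil hji hui0 hvi0 hwA hwj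
      have := hmax _ ⟨M, hMC, hMN, hML⟩
      omega
    · -- reverse case
      have hNr : L0.reverse.Nodup := by rwa [List.nodup_reverse]
      have hlenr : L0.reverse.length = l + 1 := by simp [hlen]
      have hi'lt : l - 1 - i < l := by omega
      have hj'le : l - j ≤ l - 1 - i := by omega
      have hu0 : G.Adj ((L0.reverse)[0]'(by simp [hlen] <;> omega)) ((L0.reverse)[(l-1-i)+1]'(by simp [hlen] <;> omega)) := by
        rw [hrev 0 (by omega), hrev ((l-1-i)+1) (by omega)]
        have e1 : l - 0 = l := by omega
        have e2 : l - ((l-1-i)+1) = i := by omega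
        convert hvi0 using 2
      have hv0 : G.Adj ((L0.reverse)[l]'(by simp [hlen] <;> omega)) ((L0.reverse)[l-1-i]'(by simp [hlen] <;> omega)) := by
        rw [hrev l (by omega), hrev (l-1-i) (by omega)]
        have e1 : l - l = 0 := by omega
        have e2 : l - (l-1-i) = i + 1 := by omega
        convert hui0 using 2
      have hwr : w ∉ L0.reverse := by rwa [List.mem_reverse]
      have hwjr : G.Adj w ((L0.reverse)[l - j]'(by simp [hlen] <;> omega)) := by
        rw [hrev (l-j) (by omega)]
        have e : l - (l - j) = j := by omega
        convert hwj using 2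
      obtain ⟨M, hMC, hMN, hML⟩ := rotation' (chain_rev hC) hNr hlenr hi'lt hj'le hu0 hv0 hwr hwjr
      have := hmax _ ⟨M, hMC, hMN, hML⟩
      omega
  -- now truncate
  obtain ⟨L, hC, hN, hL⟩ := hmem
  refine ⟨L.take (k+1), hC.take _, (List.take_sublist _ _).nodup hN, ?_⟩
  rw [List.length_take]
  omega

end EG

section CNT

variable {V : Type*} [Fintype V] [DecidableEq V] (G : SimpleGraph V) [DecidableRel G.Adj]

lemma exists_walk (G : SimpleGraph V) :
    ∀ (L : List V) (a : V), (a :: L).Chain' G.Adj → ∃ b, ∃ w : G.Walk a b, w.support = a :: L := by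
  intro L
  induction L with
  | nil => intro a _; exact ⟨a, SimpleGraph.Walk.nil, rfl⟩
  | cons x L ih =>
    intro a h
    unfold List.Chain' at h; rw [List.isChain_cons_cons] at h
    obtain ⟨b, w, hw⟩ := ih x h.2
    exact ⟨b, SimpleGraph.Walk.cons h.1 w, by simp [hw]⟩

lemma filter_coe_card (s : Finset V) (p : V → Prop) [DecidablePred p] :
    ((Finset.univ : Finset {x // x ∈ s}).filter fun b => p b.1).card = (s.filter p).card := by
  apply Finset.card_bij (fun (b : {x // x ∈ s}) _ => (b : V))
  · intro b hb
    rw [Finset.mem_filter] at hb ⊢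
    exact ⟨b.2, hb.2⟩
  · intro b hb c hc h
    exact Subtype.ext h
  · intro b hb
    rw [Finset.mem_filter] at hb
    exact ⟨⟨b, hb.1⟩, by simp [hb.2], rfl⟩

noncomputable local instance (s : Finset V) : DecidableRel (G.comap (Subtype.val : {x // x ∈ s} → V)).Adj :=
  fun a b => inferInstanceAs (Decidable (G.Adj ↑a ↑b))

lemma induce_twice (s : Finset V) :
    2 * (G.comap (Subtype.val : {x // x ∈ s} → V)).edgeFinset.card
      = ∑ a ∈ s, (s.filter (fun b => G.Adj a b)).card := by
  rw [← SimpleGraph.sum_degrees_eq_twice_card_edges]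
  rw [← Finset.sum_coe_sort s (fun a => (s.filter (fun b => G.Adj a b)).card)]
  apply Finset.sum_congr rfl
  intro a _
  rw [← SimpleGraph.card_neighborFinset_eq_degree, SimpleGraph.neighborFinset_eq_filter,
    ← filter_coe_card s (fun b => G.Adj ↑a b)]
  congr 1

end CNT

universe u

theorem EGmain (k : ℕ) (hk : 1 ≤ k) : ∀ (n : ℕ) (V : Type u) [Fintype V] [DecidableEq V]
    (G : SimpleGraph V) [DecidableRel G.Adj], Fintype.card V = n →
    (∀ L : List V, L.Chain' G.Adj → L.Nodup → L.length ≠ k + 1) →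
    2 * G.edgeFinset.card ≤ n * (k - 1) := by
  intro n
  induction n using Nat.strong_induction_on with
  | _ n ih =>
  intro V iF iD G iR hn hfree
  have hfreesub : ∀ (s : Finset V) (L : List {x // x ∈ s}),
      L.Chain' (G.comap (Subtype.val : {x // x ∈ s} → V)).Adj → L.Nodup → L.length ≠ k + 1 := by
    intro s L hC hN hL
    refine hfree (L.map Subtype.val) ?_ ?_ ?_
    · exact List.isChain_map_of_isChain Subtype.val (fun a b h => h) hC
    · exact hN.map Subtype.val_injective
    · rwa [List.length_map]
  by_cases hsplit : ∃ A : Finset V, A.Nonempty ∧ Aᶜ.Nonempty ∧ ∀ a ∈ A, ∀ b ∈ Aᶜ, ¬ G.Adj a b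
  · obtain ⟨A, hA, hAc, hnoedge⟩ := hsplit
    have hfiltA : ∀ a ∈ A, (Finset.univ.filter (fun b => G.Adj a b)) = A.filter (fun b => G.Adj a b) := by
      intro a ha
      ext b
      simp only [Finset.mem_filter, Finset.mem_univ, true_and]
      refine ⟨fun hb => ⟨?_, hb⟩, fun h => h.2⟩
      by_contra hbA
      exact hnoedge a ha b (Finset.mem_compl.2 hbA) hb
    have hfiltAc : ∀ a ∈ Aᶜ, (Finset.univ.filter (fun b => G.Adj a b)) = Aᶜ.filter (fun b => G.Adj a b) := by
      intro a ha
      ext b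
      simp only [Finset.mem_filter, Finset.mem_univ, true_and]
      refine ⟨fun hb => ⟨?_, hb⟩, fun h => h.2⟩
      rw [Finset.mem_compl]
      intro hbA
      exact hnoedge b hbA a ha hb.symm
    have hdegA : ∀ a ∈ A, G.degree a = (A.filter (fun b => G.Adj a b)).card := by
      intro a ha
      rw [← SimpleGraph.card_neighborFinset_eq_degree, SimpleGraph.neighborFinset_eq_filter,
        hfiltA a ha]
    have hdegAc : ∀ a ∈ Aᶜ, G.degree a = (Aᶜ.filter (fun b => G.Adj a b)).card := by
      intro a ha
      rw [← SimpleGraph.card_neighborFinset_eq_degree, SimpleGraph.neighborFinset_eq_filter,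
        hfiltAc a ha]
    have hcardA : A.card < n := by
      have h1 := Finset.card_add_card_compl A
      have h2 := Finset.card_pos.2 hAc
      omega
    have hcardAc : Aᶜ.card < n := by
      have h1 := Finset.card_add_card_compl A
      have h2 := Finset.card_pos.2 hA
      omega
    have ih1 := ih A.card hcardA {x // x ∈ A} (G.comap Subtype.val) (Fintype.card_coe A) (hfreesub A)
    have ih2 := ih Aᶜ.card hcardAc {x // x ∈ Aᶜ} (G.comap Subtype.val) (Fintype.card_coe Aᶜ) (hfreesub Aᶜ)
    have hsumA : ∑ a ∈ A, G.degree a ≤ A.card * (k - 1) := by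
      calc ∑ a ∈ A, G.degree a = ∑ a ∈ A, (A.filter (fun b => G.Adj a b)).card :=
            Finset.sum_congr rfl hdegA
        _ = 2 * (G.comap (Subtype.val : {x // x ∈ A} → V)).edgeFinset.card := (induce_twice G A).symm
        _ ≤ A.card * (k - 1) := ih1
    have hsumAc : ∑ a ∈ Aᶜ, G.degree a ≤ Aᶜ.card * (k - 1) := by
      calc ∑ a ∈ Aᶜ, G.degree a = ∑ a ∈ Aᶜ, (Aᶜ.filter (fun b => G.Adj a b)).card :=
            Finset.sum_congr rfl hdegAc
        _ = 2 * (G.comap (Subtype.val : {x // x ∈ Aᶜ} → V)).edgeFinset.card := (induce_twice G Aᶜ).symm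
        _ ≤ Aᶜ.card * (k - 1) := ih2
    have h2e : ∑ v : V, G.degree v = 2 * G.edgeFinset.card :=
      SimpleGraph.sum_degrees_eq_twice_card_edges G
    have hsplitsum : ∑ a ∈ A, G.degree a + ∑ a ∈ Aᶜ, G.degree a = ∑ v : V, G.degree v :=
      Finset.sum_add_sum_compl A _
    have hfin : A.card * (k - 1) + Aᶜ.card * (k - 1) = n * (k - 1) := by
      rw [← Nat.add_mul, Finset.card_add_card_compl, hn]
    omega
  · push_neg at hsplit
    have hconn : ∀ A : Finset V, A.Nonempty → Aᶜ.Nonempty → ∃ a ∈ A, ∃ b ∈ Aᶜ, G.Adj a b :=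
      fun A h1 h2 => hsplit A h1 h2
    by_cases hdeg : ∀ v : V, k ≤ 2 * G.degree v
    · by_cases hnk : n ≤ k
      · have hb : ∀ v : V, G.degree v ≤ n - 1 := by
          intro v
          have := G.degree_lt_card_verts v
          omega
        have hs : ∑ v : V, G.degree v ≤ n * (n - 1) := by
          calc ∑ v : V, G.degree v ≤ ∑ _v : V, (n - 1) := Finset.sum_le_sum (fun v _ => hb v)
            _ = n * (n - 1) := by rw [Finset.sum_const, Finset.card_univ, hn, smul_eq_mul]
        have h2e : ∑ v : V, G.degree v = 2 * G.edgeFinset.card :=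
          SimpleGraph.sum_degrees_eq_twice_card_edges G
        have hmul : n * (n - 1) ≤ n * (k - 1) := Nat.mul_le_mul_left _ (by omega)
        omega
      · exfalso
        obtain ⟨L, hC, hN, hL⟩ := key G k hk hdeg hconn (by omega)
        exact hfree L hC hN hL
    · push_neg at hdeg
      obtain ⟨v, hv⟩ := hdeg
      set A : Finset V := {v}ᶜ with hAdef
      have hn1 : 1 ≤ n := by
        rw [← hn]
        exact Fintype.card_pos_iff.2 ⟨v⟩
      have hAcard : A.card = n - 1 := by
        rw [hAdef, Finset.card_compl, Finset.card_singleton, hn]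
      have hdeg_split : ∀ a ∈ A, G.degree a
          = (A.filter (fun b => G.Adj a b)).card + (if G.Adj a v then 1 else 0) := by
        intro a ha
        rw [← SimpleGraph.card_neighborFinset_eq_degree, SimpleGraph.neighborFinset_eq_filter]
        have huniv : (Finset.univ : Finset V) = A ∪ {v} := by
          ext x
          by_cases hx : x = v <;> simp [hAdef, hx]
        rw [huniv, Finset.filter_union, Finset.card_union_of_disjoint, Finset.filter_singleton]
        · congr 1
          split_ifs <;> simp
        · refine Finset.disjoint_filter_filter ?_
          rw [hAdef]
          exact disjoint_compl_left
      have hsum_ind : ∑ a ∈ A, (if G.Adj a v then 1 else 0) = G.degree v := by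
        rw [Finset.sum_boole, Nat.cast_id, ← SimpleGraph.card_neighborFinset_eq_degree,
          SimpleGraph.neighborFinset_eq_filter]
        congr 1
        ext b
        simp only [Finset.mem_filter, Finset.mem_univ, true_and, hAdef, Finset.mem_compl,
          Finset.mem_singleton]
        constructor
        · exact fun h => h.2.symm
        · intro h
          exact ⟨fun hbv => G.loopless.irrefl v (hbv ▸ h), h.symm⟩
      have ih3 := ih (n-1) (by omega) {x // x ∈ A} (G.comap Subtype.val)
        (by rw [Fintype.card_coe, hAcard]) (hfreesub A)
      have hsumA : ∑ a ∈ A, G.degree a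
          = 2 * (G.comap (Subtype.val : {x // x ∈ A} → V)).edgeFinset.card + G.degree v := by
        rw [Finset.sum_congr rfl hdeg_split, Finset.sum_add_distrib, hsum_ind]
        exact congrArg (· + G.degree v) (induce_twice G A).symm
      have h2e : ∑ u : V, G.degree u = 2 * G.edgeFinset.card :=
        SimpleGraph.sum_degrees_eq_twice_card_edges G
      have hsplitsum : ∑ a ∈ ({v} : Finset V), G.degree a + ∑ a ∈ A, G.degree a
          = ∑ u : V, G.degree u := by
        rw [hAdef]
        exact Finset.sum_add_sum_compl {v} _
      rw [Finset.sum_singleton] at hsplitsum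
      have hfin : (k - 1) + (n - 1) * (k - 1) = n * (k - 1) := by
        have hn' : n - 1 + 1 = n := by omega
        calc (k - 1) + (n - 1) * (k - 1) = (n - 1 + 1) * (k - 1) := by ring
          _ = n * (k - 1) := by rw [hn']
      omega


/-- **Erdős–Gallai theorem.** If `n ≥ k ≥ 1` and an `n`-vertex simple graph `G`
contains no path with `k` edges, then `G` has at most `n(k-1)/2` edges. -/
theorem stmt0 {V : Type*} [Fintype V] [DecidableEq V]
    (G : SimpleGraph V) [DecidableRel G.Adj]
    (n k : ℕ) (hn : Fintype.card V = n) (hk1 : 1 ≤ k) (hkn : k ≤ n)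
    (hnopath : ∀ (u v : V) (p : G.Walk u v), p.IsPath → p.length ≠ k) :
    (G.edgeFinset.card : ℝ) ≤ (n : ℝ) * ((k : ℝ) - 1) / 2 := by
  have hfree : ∀ L : List V, L.Chain' G.Adj → L.Nodup → L.length ≠ k + 1 := by
    intro L hC hN hL
    cases L with
    | nil => simp at hL
    | cons a L' =>
      obtain ⟨b, w, hsup⟩ := exists_walk G L' a hC
      have hpath : w.IsPath := by
        rw [SimpleGraph.Walk.isPath_def, hsup]
        exact hN
      have hls := SimpleGraph.Walk.length_support w
      rw [hsup] at hls
      simp only [List.length_cons] at hls hL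
      exact hnopath a b w hpath (by omega)
  have h2 := EGmain k hk1 n V G hn hfree
  have hcast : ((2 * G.edgeFinset.card : ℕ) : ℝ) ≤ ((n * (k - 1) : ℕ) : ℝ) := Nat.cast_le.2 h2
  push_cast [Nat.cast_sub hk1] at hcast
  linarith
end

section
/- Let H be an n-vertex r-uniform connected hypergraph whose longest Berge path has length r. If H contains a Berge cycle of length r+1, then H is the complete r-uniform hypergraph on r+1 vertices, i.e., n = r+1 and H has exactly r+1 edges, namely all r-element subsets of V(H). -/
/-- A Berge path of length `k` in a hypergraph with edge set `E`: an alternating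
sequence of `k+1` distinct vertices `v 0, …, v k` and `k` distinct edges
`e 0, …, e (k-1)` of `E` with `v i, v (i+1) ∈ e i` for each `i`. -/
def IsBergePath {V : Type*} [DecidableEq V] (E : Finset (Finset V)) (k : ℕ)
    (v : Fin (k + 1) → V) (e : Fin k → Finset V) : Prop :=
  Function.Injective v ∧ Function.Injective e ∧
    (∀ i, e i ∈ E) ∧ ∀ i : Fin k, v i.castSucc ∈ e i ∧ v i.succ ∈ e i

/-- A Berge cycle of length `k` in a hypergraph with edge set `E`: `k` distinct
vertices `v 0, …, v (k-1)` and `k` distinct edges with `v i, v (i+1 mod k) ∈ e i`. -/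
def IsBergeCycle {V : Type*} [DecidableEq V] (E : Finset (Finset V)) (k : ℕ)
    (v : Fin k → V) (e : Fin k → Finset V) : Prop :=
  Function.Injective v ∧ Function.Injective e ∧
    (∀ i, e i ∈ E) ∧ ∀ i : Fin k, v i ∈ e i ∧ v (finRotate k i) ∈ e i

/-- A hypergraph is connected if every pair of distinct vertices is joined by a
Berge path. -/
def HConnected {V : Type*} [DecidableEq V] (E : Finset (Finset V)) : Prop :=
  ∀ u w : V, u ≠ w → ∃ (k : ℕ) (v : Fin (k + 1) → V) (e : Fin k → Finset V),
    IsBergePath E k v e ∧ v 0 = u ∧ v (Fin.last k) = w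

open Fin.NatCast Fin.CommRing in
/-- Key extension lemma: given a Berge cycle of length `r+1` (with the rotation
condition unfolded as `hrot`), if an edge `f` contains a cycle vertex `v i`
(with `f` distinct from all cycle edges except possibly `e i`) and also a vertex
`b` not on the cycle, then we can build a Berge path of length `r+1`,
contradicting `hmax`. -/
lemma keyA {V : Type*} [DecidableEq V] (r : ℕ) (E : Finset (Finset V))
    (hmax : ∀ (m : ℕ) (v : Fin (m + 1) → V) (e : Fin m → Finset V),
      IsBergePath E m v e → m ≤ r)
    (v : Fin (r + 1) → V) (e : Fin (r + 1) → Finset V)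
    (hvinj : Function.Injective v) (heinj : Function.Injective e)
    (heE : ∀ j, e j ∈ E)
    (hrot : ∀ j : Fin (r+1), v j ∈ e j ∧ v (j + 1) ∈ e j)
    (f : Finset V) (hf : f ∈ E) (i : Fin (r+1)) (hvi : v i ∈ f)
    (hne : ∀ m, m ≠ i → f ≠ e m) (b : V) (hb : b ∈ f) (hbS : ∀ j, v j ≠ b) :
    False := by
  set σ : ℕ → Fin (r+1) := fun m => (i + 1) + (m : Fin (r+1)) with hσ
  have hσinj : ∀ m1 m2 : ℕ, m1 < r+1 → m2 < r+1 → σ m1 = σ m2 → m1 = m2 := by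
    intro m1 m2 h1 h2 h
    have h' := add_left_cancel h
    have hval : ((m1 : Fin (r+1)) : ℕ) = ((m2 : Fin (r+1)) : ℕ) := by rw [h']
    rwa [Fin.val_cast_of_lt h1, Fin.val_cast_of_lt h2] at hval
  have hσr : σ r = i := by
    show (i + 1) + ((r : ℕ) : Fin (r+1)) = i
    have h1 : ((r + 1 : ℕ) : Fin (r+1)) = 0 := Fin.natCast_self _
    have h2 : (i + 1) + ((r : ℕ) : Fin (r+1)) = i + ((r + 1 : ℕ) : Fin (r+1)) := by
      push_cast; ring
    rw [h2, h1, add_zero]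
  have hσsucc : ∀ m : ℕ, σ (m+1) = σ m + 1 := by
    intro m
    show (i + 1) + ((m + 1 : ℕ) : Fin (r+1)) = (i + 1) + ((m : ℕ) : Fin (r+1)) + 1
    push_cast; ring
  have hσne : ∀ m : ℕ, m < r → σ m ≠ i := by
    intro m hm hmi
    have := hσinj m r (by omega) (by omega) (by rw [hmi, hσr])
    omega
  set w : Fin (r + 1 + 1) → V := fun k => if h : k.val < r + 1 then v (σ k.val) else b with hw
  set g : Fin (r + 1) → Finset V := fun k => if h : k.val < r then e (σ k.val) else f with hg
  have hpath : IsBergePath E (r+1) w g := by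
    refine ⟨?_, ?_, ?_, ?_⟩
    · intro k1 k2 h
      simp only [hw] at h
      split_ifs at h with h1 h2 h2
      · exact Fin.ext (hσinj _ _ h1 h2 (hvinj h))
      · exact absurd h (hbS _)
      · exact absurd h.symm (hbS _)
      · exact Fin.ext (by omega)
    · intro k1 k2 h
      simp only [hg] at h
      split_ifs at h with h1 h2 h2
      · exact Fin.ext (hσinj _ _ (by omega) (by omega) (heinj h))
      · exact absurd h.symm (hne _ (hσne _ h1))
      · exact absurd h (hne _ (hσne _ h2))
      · exact Fin.ext (by omega)
    · intro k
      simp only [hg]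
      split_ifs
      exacts [heE _, hf]
    · intro k
      by_cases hk : k.val < r
      · constructor
        · have h1 : (k.castSucc).val < r + 1 := by
            simp only [Fin.coe_castSucc]; omega
          simp only [hw, hg, dif_pos h1, dif_pos hk, Fin.coe_castSucc]
          exact (hrot (σ k.val)).1
        · have h1 : (k.succ).val < r + 1 := by
            simp only [Fin.val_succ]; omega
          simp only [hw, hg, dif_pos h1, dif_pos hk, Fin.val_succ]
          rw [hσsucc]
          exact (hrot (σ k.val)).2
      · have hk' : k.val = r := by omega
        constructor
        · have h1 : (k.castSucc).val < r + 1 := by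
            simp only [Fin.coe_castSucc]; omega
          simp only [hw, hg, dif_pos h1, dif_neg hk, Fin.coe_castSucc, hk', hσr]
          exact hvi
        · have h1 : ¬ (k.succ).val < r + 1 := by
            simp only [Fin.val_succ, hk']; omega
          simp only [hw, hg, dif_neg h1, dif_neg hk]
          exact hb
  have := hmax (r+1) w g hpath
  omega

/-- If an `n`-vertex `r`-uniform connected hypergraph whose longest Berge path has
length `r` contains a Berge cycle of length `r+1`, then it is the complete `r`-uniform
hypergraph on `r+1` vertices: `n = r+1` and its edges are exactly all `r`-subsets
(in particular there are exactly `r+1` of them). -/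
theorem stmt9 {V : Type*} [Fintype V] [DecidableEq V]
    (n r : ℕ) (hn : Fintype.card V = n)
    (E : Finset (Finset V)) (hunif : ∀ e ∈ E, e.card = r)
    (hconn : HConnected E)
    (hex : ∃ (v : Fin (r + 1) → V) (e : Fin r → Finset V), IsBergePath E r v e)
    (hmax : ∀ (m : ℕ) (v : Fin (m + 1) → V) (e : Fin m → Finset V),
      IsBergePath E m v e → m ≤ r)
    (hcyc : ∃ (v : Fin (r + 1) → V) (e : Fin (r + 1) → Finset V),
      IsBergeCycle E (r + 1) v e) :
    n = r + 1 ∧ E.card = r + 1 ∧ E = Finset.univ.powersetCard r := by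
  classical
  obtain ⟨v, e, hvinj, heinj, heE, hve⟩ := hcyc
  have hrot : ∀ j : Fin (r+1), v j ∈ e j ∧ v (j + 1) ∈ e j := by
    intro j
    have := hve j
    rwa [finRotate_succ_apply] at this
  -- key: no edge contains both a cycle vertex and a non-cycle vertex
  have key : ∀ f ∈ E, ∀ a b : V, a ∈ f → b ∈ f → (∃ i, v i = a) → (∀ j, v j ≠ b) →
      False := by
    rintro f hf a b haf hbf ⟨i0, hi0⟩ hbS
    obtain ⟨i, hvi, hne⟩ : ∃ i : Fin (r+1), v i ∈ f ∧ ∀ m, m ≠ i → f ≠ e m := by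
      by_cases hfe : ∃ j, f = e j
      · obtain ⟨j, hj⟩ := hfe
        exact ⟨j, hj ▸ (hrot j).1, fun m hm hfm => hm (heinj (hfm.symm.trans hj))⟩
      · exact ⟨i0, hi0 ▸ haf, fun m _ hfm => hfe ⟨m, hfm⟩⟩
    exact keyA r E hmax v e hvinj heinj heE hrot f hf i hvi hne b hbf hbS
  -- every vertex is a cycle vertex
  have hall : ∀ x : V, ∃ j, v j = x := by
    by_contra h
    push_neg at h
    obtain ⟨x, hx⟩ := h
    have hxne : x ≠ v 0 := fun h => (hx 0) h.symm
    obtain ⟨k, u, ee, ⟨huinj, heeinj, heeE, huve⟩, hu0, hulast⟩ := hconn x (v 0) hxne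
    have hP : ∃ m : ℕ, ∃ (h : m < k + 1), ∃ j, v j = u ⟨m, h⟩ := by
      refine ⟨k, Nat.lt_succ_self k, 0, ?_⟩
      rw [← hulast]; rfl
    have hm0spec := Nat.find_spec hP
    set m0 := Nat.find hP with hm0def
    obtain ⟨hm0lt, j0, hj0⟩ := hm0spec
    have hm0pos : 0 < m0 := by
      rcases Nat.eq_zero_or_pos m0 with h0 | h
      · exfalso
        apply hx j0
        rw [hj0, ← hu0]
        congr 1
        exact Fin.ext (by simp [h0])
      · exact h
    have hm'lt : m0 - 1 < k := by omega
    set j' : Fin k := ⟨m0 - 1, hm'lt⟩ with hj'def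
    have hsucc : j'.succ = ⟨m0, hm0lt⟩ := by
      apply Fin.ext
      simp [hj'def, Fin.val_succ]
      omega
    have ha : v j0 = u j'.succ := by rw [hsucc]; exact hj0
    have hbS : ∀ j, v j ≠ u j'.castSucc := by
      intro j hj
      have hPm' : ∃ (h : m0 - 1 < k + 1), ∃ j, v j = u ⟨m0 - 1, h⟩ := by
        refine ⟨by omega, j, ?_⟩
        rw [hj]
        congr 1
      exact Nat.find_min hP (show m0 - 1 < m0 by omega) hPm'
    exact key (ee j') (heeE j') (u j'.succ) (u j'.castSucc) (huve j').2 (huve j').1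
      ⟨j0, ha⟩ hbS
  have hbij : Function.Bijective v := ⟨hvinj, hall⟩
  have hcard : Fintype.card V = r + 1 := by
    rw [← Fintype.card_fin (r + 1)]
    exact (Fintype.card_of_bijective hbij).symm
  have hEsub : E ⊆ Finset.univ.powersetCard r := fun f hf =>
    Finset.mem_powersetCard.2 ⟨Finset.subset_univ f, hunif f hf⟩
  have hpcard : (Finset.univ.powersetCard r : Finset (Finset V)).card = r + 1 := by
    rw [Finset.card_powersetCard, Finset.card_univ, hcard]
    exact Nat.choose_succ_self_right r
  have hEge : r + 1 ≤ E.card := by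
    have himg : Finset.univ.image e ⊆ E := by
      intro f hf
      obtain ⟨j, _, hj⟩ := Finset.mem_image.1 hf
      exact hj ▸ heE j
    calc r + 1 = (Finset.univ.image e).card := by
          rw [Finset.card_image_of_injective _ heinj, Finset.card_univ, Fintype.card_fin]
      _ ≤ E.card := Finset.card_le_card himg
  have hEeq : E = Finset.univ.powersetCard r :=
    Finset.eq_of_subset_of_card_le hEsub (by omega)
  exact ⟨hn.symm.trans hcard, by rw [hEeq, hpcard], hEeq⟩
end

section
/- Let H be an r-uniform connected hypergraph whose longest Berge path has length r. If there exists a Berge path P = v0, e1, v1, e2, v2, …, v_{r−1}, e_r, v_r of length r in H and an edge of H containing v0 that is not among the defining edges e1,…,e_r of P, then H is the complete r-uniform hypergraph on r+1 vertices. -/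
lemma ext_lemma {V : Type*} [DecidableEq V] {r : ℕ} {E : Finset (Finset V)}
    (hmax : ∀ (m : ℕ) (v : Fin (m + 1) → V) (e : Fin m → Finset V),
      IsBergePath E m v e → m ≤ r)
    {v' : Fin (r+1) → V} {e' : Fin r → Finset V} (hp : IsBergePath E r v' e')
    {g : Finset V} (hg : g ∈ E) (hg0 : v' 0 ∈ g) (hgne : ∀ i, e' i ≠ g) :
    ∀ x ∈ g, ∃ i, v' i = x := by
  intro x hx
  by_contra hc
  push_neg at hc
  obtain ⟨hvinj, heinj, heE, hinc⟩ := hp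
  set v'' : Fin (r+2) → V := Fin.cases x v' with hv''
  set e'' : Fin (r+1) → Finset V := Fin.cases g e' with he''
  have hbp : IsBergePath E (r+1) v'' e'' := by
    refine ⟨?_, ?_, ?_, ?_⟩
    · intro a b hab
      induction a using Fin.cases with
      | zero =>
        induction b using Fin.cases with
        | zero => rfl
        | succ j =>
          simp only [hv'', Fin.cases_zero, Fin.cases_succ] at hab
          exact absurd hab.symm (hc j)
      | succ i =>
        induction b using Fin.cases with
        | zero =>
          simp only [hv'', Fin.cases_zero, Fin.cases_succ] at hab
          exact absurd hab (hc i)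
        | succ j =>
          simp only [hv'', Fin.cases_succ] at hab
          exact congrArg Fin.succ (hvinj hab)
    · intro a b hab
      induction a using Fin.cases with
      | zero =>
        induction b using Fin.cases with
        | zero => rfl
        | succ j =>
          simp only [he'', Fin.cases_zero, Fin.cases_succ] at hab
          exact absurd hab.symm (hgne j)
      | succ i =>
        induction b using Fin.cases with
        | zero =>
          simp only [he'', Fin.cases_zero, Fin.cases_succ] at hab
          exact absurd hab (hgne i)
        | succ j =>
          simp only [he'', Fin.cases_succ] at hab
          exact congrArg Fin.succ (heinj hab)
    · intro i
      induction i using Fin.cases with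
      | zero => simpa [he''] using hg
      | succ j => simpa [he''] using heE j
    · intro i
      induction i using Fin.cases with
      | zero =>
        constructor
        · show v'' (Fin.castSucc 0) ∈ e'' 0
          have : (Fin.castSucc (0 : Fin (r+1))) = (0 : Fin (r+2)) := rfl
          rw [this]
          simpa [hv'', he''] using hx
        · show v'' (Fin.succ 0) ∈ e'' 0
          exact hg0
      | succ j =>
        constructor
        · have h1 : (Fin.succ j).castSucc = (j.castSucc).succ := by
            rw [Fin.succ_castSucc]
          rw [h1]
          show v'' (Fin.succ j.castSucc) ∈ e'' (Fin.succ j)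
          simpa [hv'', he''] using (hinc j).1
        · show v'' (Fin.succ (Fin.succ j)) ∈ e'' (Fin.succ j)
          simpa [hv'', he''] using (hinc j).2
  have := hmax (r+1) v'' e'' hbp
  omega

lemma rot_path {V : Type*} [DecidableEq V] {r : ℕ} {E : Finset (Finset V)}
    {v : Fin (r+1) → V} {e : Fin r → Finset V} (hp : IsBergePath E r v e)
    (j : ℕ) (hj1 : 1 ≤ j) (hj2 : j ≤ r)
    (f g : Finset V) (hfE : f ∈ E) (hgE : g ∈ E)
    (hf0 : v ⟨0, by omega⟩ ∈ f) (hf1 : v ⟨1, by omega⟩ ∈ f)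
    (hg0 : v ⟨0, by omega⟩ ∈ g) (hgj : v ⟨j, by omega⟩ ∈ g)
    (hfg : f ≠ g)
    (hfj : 2 ≤ j → f ≠ e ⟨j-1, by omega⟩) (hgj' : g ≠ e ⟨j-1, by omega⟩)
    (hef : ∀ i : Fin r, ((1 ≤ i.val ∧ i.val + 2 ≤ j) ∨ j ≤ i.val) → e i ≠ f ∧ e i ≠ g) :
    ∃ (w : Fin (r+1) → V) (b : Fin r → Finset V),
      IsBergePath E r w b ∧ w 0 = v ⟨j-1, by omega⟩ ∧
      (∀ k, b k ≠ e ⟨j-1, by omega⟩) ∧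
      (∀ i, ∃ i', w i = v i') ∧
      (∀ k, b k = f ∨ b k = g ∨ ∃ k', b k = e k') := by
  obtain ⟨hvinj, heinj, heE, hinc⟩ := hp
  have hve1 : ∀ (i : ℕ) (hi : i < r), v ⟨i, by omega⟩ ∈ e ⟨i, hi⟩ := by
    intro i hi
    have := (hinc ⟨i, hi⟩).1
    simpa [Fin.castSucc_mk] using this
  have hve2 : ∀ (i : ℕ) (hi : i < r), v ⟨i+1, by omega⟩ ∈ e ⟨i, hi⟩ := by
    intro i hi
    have := (hinc ⟨i, hi⟩).2
    simpa [Fin.succ_mk] using this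
  have veq : ∀ (a : ℕ) (ha : a < r+1) (b : ℕ) (hb : b < r+1), v ⟨a,ha⟩ = v ⟨b,hb⟩ → a = b := by
    intro a ha b hb hh
    have h2 := hvinj hh
    simpa using h2
  have veq2 : ∀ (a : ℕ) (ha : a < r+1) (c : Fin (r+1)), v ⟨a,ha⟩ = v c → a = c.val := by
    intro a ha c hh
    have h2 := hvinj hh
    subst h2
    rfl
  have eeq : ∀ (a : ℕ) (ha : a < r) (b : ℕ) (hb : b < r), e ⟨a,ha⟩ = e ⟨b,hb⟩ → a = b := by
    intro a ha b hb hh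
    have h2 := heinj hh
    simpa using h2
  have eeq2 : ∀ (a : ℕ) (ha : a < r) (c : Fin r), e ⟨a,ha⟩ = e c → a = c.val := by
    intro a ha c hh
    have h2 := heinj hh
    subst h2
    rfl
  have hef' : ∀ (i : ℕ) (hi : i < r), ((1 ≤ i ∧ i + 2 ≤ j) ∨ j ≤ i) → e ⟨i,hi⟩ ≠ f ∧ e ⟨i,hi⟩ ≠ g :=
    fun i hi hcond => hef ⟨i, hi⟩ hcond
  have hem : ∀ (a : ℕ) (ha : a < r+1) (b : ℕ) (hb : b < r), (a = b ∨ a = b + 1) → v ⟨a, ha⟩ ∈ e ⟨b, hb⟩ := by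
    intro a ha b hb hab
    rcases hab with rfl | rfl
    · exact hve1 a hb
    · exact hve2 b hb
  have hms : ∀ (a : ℕ) (ha : a < r+1) (b : ℕ) (hb : b < r+1) (s : Finset V),
      a = b → v ⟨b, hb⟩ ∈ s → v ⟨a, ha⟩ ∈ s := by
    intro a ha b hb s hab hm
    subst hab
    exact hm
  refine ⟨fun i => if i.val < j then v ⟨j - 1 - i.val, by omega⟩ else v i,
          fun k => if k.val + 2 < j then e ⟨j - 2 - k.val, by omega⟩
                   else if k.val + 2 = j then f
                   else if k.val + 1 = j then g else e k,
          ⟨?_, ?_, ?_, ?_⟩, ?_, ?_, ?_, ?_⟩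
  · -- injectivity of w
    intro a c hac
    apply Fin.ext
    dsimp only at hac
    split_ifs at hac
    · have := veq _ _ _ _ hac; omega
    · have := veq2 _ _ _ hac; omega
    · have := veq2 _ _ _ hac.symm; omega
    · exact congrArg Fin.val (hvinj hac)
  · -- injectivity of b
    intro a c hab
    apply Fin.ext
    dsimp only at hab
    split_ifs at hab
    all_goals first
      | omega
      | (have := eeq _ _ _ _ hab; omega)
      | (have := eeq2 _ _ _ hab; omega)
      | (have := eeq2 _ _ _ hab.symm; omega)
      | exact congrArg Fin.val (heinj hab)
      | exact absurd hab.symm hfg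
      | exact absurd hab hfg
      | exact absurd hab ((hef' _ (by omega) (by omega)).1)
      | exact absurd hab ((hef' _ (by omega) (by omega)).2)
      | exact absurd hab.symm ((hef' _ (by omega) (by omega)).1)
      | exact absurd hab.symm ((hef' _ (by omega) (by omega)).2)
      | exact absurd hab ((hef _ (by omega)).1)
      | exact absurd hab ((hef _ (by omega)).2)
      | exact absurd hab.symm ((hef _ (by omega)).1)
      | exact absurd hab.symm ((hef _ (by omega)).2)
  · -- membership
    intro k
    dsimp only
    split_ifs <;> first | exact heE _ | exact hfE | exact hgE
  · -- incidence
    intro k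
    constructor
    · simp only [Fin.coe_castSucc]
      split_ifs
      all_goals first
        | (exfalso; omega)
        | exact (hinc k).1
        | exact hem _ _ _ _ (by omega)
        | exact hms _ _ 1 (by omega) _ (by omega) hf1
        | exact hms _ _ 0 (by omega) _ (by omega) hf0
        | exact hms _ _ 0 (by omega) _ (by omega) hg0
        | exact hms _ _ j (by omega) _ (by omega) hgj
    · simp only [Fin.val_succ]
      split_ifs
      all_goals first
        | (exfalso; omega)
        | exact (hinc k).2
        | exact hem _ _ _ _ (by omega)
        | exact hms _ _ 1 (by omega) _ (by omega) hf1
        | exact hms _ _ 0 (by omega) _ (by omega) hf0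
        | exact hms _ _ 0 (by omega) _ (by omega) hg0
        | exact hms _ _ j (by omega) _ (by omega) hgj
        | (have hkk : k.succ = (⟨j, by omega⟩ : Fin (r+1)) := by
             apply Fin.ext; simp only [Fin.val_succ]; omega
           rw [hkk]; exact hgj)
  · -- endpoint
    dsimp only
    split_ifs with h0
    · exact congrArg v (Fin.ext (by simp only [Fin.val_zero]; omega))
    · exfalso; simp only [Fin.val_zero] at h0; omega
  · -- excluded edge
    intro k
    dsimp only
    split_ifs
    all_goals first
      | exact hfj (by omega)
      | exact hgj'
      | (intro hcon; have := eeq _ _ _ _ hcon; omega)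
      | (intro hcon; have := eeq2 _ _ _ hcon.symm; omega)
  · -- range of w
    intro i
    dsimp only
    split_ifs
    · exact ⟨_, rfl⟩
    · exact ⟨_, rfl⟩
  · -- edge forms
    intro k
    dsimp only
    split_ifs
    · exact Or.inr (Or.inr ⟨_, rfl⟩)
    · exact Or.inl rfl
    · exact Or.inr (Or.inl rfl)
    · exact Or.inr (Or.inr ⟨_, rfl⟩)

section helpers
variable {V : Type*} [DecidableEq V] {r : ℕ} {E : Finset (Finset V)}
  {v : Fin (r+1) → V} {e : Fin r → Finset V}

lemma rev_path (hp : IsBergePath E r v e) :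
    ∃ (w : Fin (r+1) → V) (b : Fin r → Finset V),
      IsBergePath E r w b ∧ w 0 = v ⟨r, by omega⟩ ∧
      (∀ i, ∃ i', w i = v i') ∧ (∀ k, ∃ k', b k = e k') := by
  obtain ⟨hvinj, heinj, heE, hinc⟩ := hp
  have hve1 : ∀ (i : ℕ) (hi : i < r), v ⟨i, by omega⟩ ∈ e ⟨i, hi⟩ := by
    intro i hi; have := (hinc ⟨i, hi⟩).1; simpa [Fin.castSucc_mk] using this
  have hve2 : ∀ (i : ℕ) (hi : i < r), v ⟨i+1, by omega⟩ ∈ e ⟨i, hi⟩ := by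
    intro i hi; have := (hinc ⟨i, hi⟩).2; simpa [Fin.succ_mk] using this
  have veq : ∀ (a : ℕ) (ha : a < r+1) (b : ℕ) (hb : b < r+1), v ⟨a,ha⟩ = v ⟨b,hb⟩ → a = b := by
    intro a ha b hb hh; have h2 := hvinj hh; simpa using h2
  have eeq : ∀ (a : ℕ) (ha : a < r) (b : ℕ) (hb : b < r), e ⟨a,ha⟩ = e ⟨b,hb⟩ → a = b := by
    intro a ha b hb hh; have h2 := heinj hh; simpa using h2
  have hem : ∀ (a : ℕ) (ha : a < r+1) (b : ℕ) (hb : b < r),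
      (a = b ∨ a = b + 1) → v ⟨a, ha⟩ ∈ e ⟨b, hb⟩ := by
    intro a ha b hb hab
    rcases hab with rfl | rfl
    · exact hve1 a hb
    · exact hve2 b hb
  refine ⟨fun i => v ⟨r - i.val, by omega⟩, fun k => e ⟨r - 1 - k.val, by omega⟩,
    ⟨?_, ?_, ?_, ?_⟩, ?_, fun i => ⟨_, rfl⟩, fun k => ⟨_, rfl⟩⟩
  · intro a c hac
    dsimp only at hac
    have ha := a.isLt; have hc := c.isLt
    apply Fin.ext
    have := veq _ _ _ _ hac
    omega
  · intro a c hab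
    dsimp only at hab
    have ha := a.isLt; have hc := c.isLt
    apply Fin.ext
    have := eeq _ _ _ _ hab
    omega
  · intro k; exact heE _
  · intro k
    have hk := k.isLt
    constructor
    · show v ⟨r - (k.castSucc).val, by omega⟩ ∈ e ⟨r - 1 - k.val, by omega⟩
      simp only [Fin.coe_castSucc]
      exact hem _ _ _ _ (by omega)
    · show v ⟨r - (k.succ).val, by omega⟩ ∈ e ⟨r - 1 - k.val, by omega⟩
      simp only [Fin.val_succ]
      exact hem _ _ _ _ (by omega)
  · show v ⟨r - (0 : Fin (r+1)).val, by omega⟩ = v ⟨r, by omega⟩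
    congr 1

lemma cyc_path (hr : 1 ≤ r) (hp : IsBergePath E r v e)
    (g : Finset V) (hgE : g ∈ E)
    (hg0 : v ⟨0, by omega⟩ ∈ g) (hgr : v ⟨r, by omega⟩ ∈ g)
    (hgne : ∀ i, e i ≠ g) :
    ∃ (w : Fin (r+1) → V) (b : Fin r → Finset V),
      IsBergePath E r w b ∧ w 0 = v ⟨1, by omega⟩ ∧
      (∀ k, b k ≠ e ⟨0, by omega⟩) ∧
      (∀ i, ∃ i', w i = v i') ∧ (∀ k, b k = g ∨ ∃ k', b k = e k') := by
  obtain ⟨hvinj, heinj, heE, hinc⟩ := hp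
  have hve1 : ∀ (i : ℕ) (hi : i < r), v ⟨i, by omega⟩ ∈ e ⟨i, hi⟩ := by
    intro i hi; have := (hinc ⟨i, hi⟩).1; simpa [Fin.castSucc_mk] using this
  have hve2 : ∀ (i : ℕ) (hi : i < r), v ⟨i+1, by omega⟩ ∈ e ⟨i, hi⟩ := by
    intro i hi; have := (hinc ⟨i, hi⟩).2; simpa [Fin.succ_mk] using this
  have veq : ∀ (a : ℕ) (ha : a < r+1) (b : ℕ) (hb : b < r+1), v ⟨a,ha⟩ = v ⟨b,hb⟩ → a = b := by
    intro a ha b hb hh; have h2 := hvinj hh; simpa using h2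
  have eeq : ∀ (a : ℕ) (ha : a < r) (b : ℕ) (hb : b < r), e ⟨a,ha⟩ = e ⟨b,hb⟩ → a = b := by
    intro a ha b hb hh; have h2 := heinj hh; simpa using h2
  have hem : ∀ (a : ℕ) (ha : a < r+1) (b : ℕ) (hb : b < r),
      (a = b ∨ a = b + 1) → v ⟨a, ha⟩ ∈ e ⟨b, hb⟩ := by
    intro a ha b hb hab
    rcases hab with rfl | rfl
    · exact hve1 a hb
    · exact hve2 b hb
  have hms : ∀ (a : ℕ) (ha : a < r+1) (b : ℕ) (hb : b < r+1) (s : Finset V),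
      a = b → v ⟨b, hb⟩ ∈ s → v ⟨a, ha⟩ ∈ s := by
    intro a ha b hb s hab hm; subst hab; exact hm
  refine ⟨fun i => if h : i.val < r then v ⟨i.val + 1, by omega⟩ else v ⟨0, by omega⟩,
          fun k => if h : k.val + 1 < r then e ⟨k.val + 1, by omega⟩ else g,
          ⟨?_, ?_, ?_, ?_⟩, ?_, ?_, ?_, ?_⟩
  · intro a c hac
    dsimp only at hac
    have ha := a.isLt; have hc := c.isLt
    apply Fin.ext
    split_ifs at hac
    all_goals first
      | (have := veq _ _ _ _ hac; omega)
  · intro a c hab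
    dsimp only at hab
    have ha := a.isLt; have hc := c.isLt
    apply Fin.ext
    split_ifs at hab
    all_goals first
      | (have := eeq _ _ _ _ hab; omega)
      | exact absurd hab (hgne _)
      | exact absurd hab.symm (hgne _)
      | omega
  · intro k
    dsimp only
    split_ifs
    · exact heE _
    · exact hgE
  · intro k
    have hk := k.isLt
    constructor
    · simp only [Fin.coe_castSucc]
      split_ifs
      all_goals first
        | (exfalso; omega)
        | exact hem _ _ _ _ (by omega)
        | exact hms _ _ r (by omega) _ (by omega) hgr
    · simp only [Fin.val_succ]
      split_ifs
      all_goals first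
        | (exfalso; omega)
        | exact hem _ _ _ _ (by omega)
        | exact hms _ _ 0 (by omega) _ (by omega) hg0
  · dsimp only
    split_ifs with h0
    · congr 1
    · exfalso; simp only [Fin.val_zero] at h0; omega
  · intro k
    dsimp only
    split_ifs
    · intro hcon; have := eeq _ _ _ _ hcon; omega
    · exact Ne.symm (hgne _)
  · intro i
    dsimp only
    split_ifs
    · exact ⟨_, rfl⟩
    · exact ⟨_, rfl⟩
  · intro k
    dsimp only
    split_ifs
    · exact Or.inr ⟨_, rfl⟩
    · exact Or.inl rfl

end helpers

/-- If an `r`-uniform connected hypergraph whose longest Berge path has length `r`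
has a Berge path `P` of length `r` and an edge containing the first terminal vertex of
`P` which is not a defining edge of `P`, then the hypergraph is the complete `r`-uniform
hypergraph on `r+1` vertices. -/
theorem stmt10 {V : Type*} [Fintype V] [DecidableEq V]
    (r : ℕ) (E : Finset (Finset V)) (hunif : ∀ e ∈ E, e.card = r)
    (hconn : HConnected E)
    (hmax : ∀ (m : ℕ) (v : Fin (m + 1) → V) (e : Fin m → Finset V),
      IsBergePath E m v e → m ≤ r)
    (vv : Fin (r + 1) → V) (ee : Fin r → Finset V)
    (hP : IsBergePath E r vv ee)
    (h : Finset V) (hh : h ∈ E) (hv0 : vv 0 ∈ h) (hnotdef : ∀ i, ee i ≠ h) :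
    Fintype.card V = r + 1 ∧ E = Finset.univ.powersetCard r := by
  classical
  obtain ⟨hvinj, heinj, heE, hinc⟩ := hP
  have hP' : IsBergePath E r vv ee := ⟨hvinj, heinj, heE, hinc⟩
  -- r ≥ 1
  have hr1 : 1 ≤ r := by
    by_contra hc
    push_neg at hc
    have hcard := hunif h hh
    have : h = ∅ := Finset.card_eq_zero.mp (by omega)
    rw [this] at hv0
    exact absurd hv0 (Finset.notMem_empty _)
  -- r ≥ 2
  have hr2 : 2 ≤ r := by
    by_contra hc
    push_neg at hc
    have hi := hinc ⟨0, by omega⟩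
    have hne : vv ((⟨0, by omega⟩ : Fin r).castSucc) ≠ vv ((⟨0, by omega⟩ : Fin r).succ) := by
      intro hcc
      have h2 := hvinj hcc
      have h3 := congrArg Fin.val h2
      simp only [Fin.castSucc_mk, Fin.succ_mk] at h3
      omega
    have hlt : 1 < (ee ⟨0, by omega⟩).card :=
      Finset.one_lt_card.mpr ⟨_, hi.1, _, hi.2, hne⟩
    have := hunif _ (heE ⟨0, by omega⟩)
    omega
  -- basic helpers
  have hve1 : ∀ (i : ℕ) (hi : i < r), vv ⟨i, by omega⟩ ∈ ee ⟨i, hi⟩ := by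
    intro i hi; have := (hinc ⟨i, hi⟩).1; simpa [Fin.castSucc_mk] using this
  have hve2 : ∀ (i : ℕ) (hi : i < r), vv ⟨i+1, by omega⟩ ∈ ee ⟨i, hi⟩ := by
    intro i hi; have := (hinc ⟨i, hi⟩).2; simpa [Fin.succ_mk] using this
  have eeq : ∀ (a : ℕ) (ha : a < r) (b : ℕ) (hb : b < r), ee ⟨a,ha⟩ = ee ⟨b,hb⟩ → a = b := by
    intro a ha b hb hhh; have h2 := heinj hhh; simpa using h2
  have eeq2 : ∀ (a : ℕ) (ha : a < r) (c : Fin r), ee ⟨a,ha⟩ = ee c → a = c.val := by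
    intro a ha c hhh; have h2 := heinj hhh; subst h2; rfl
  have hem : ∀ (a : ℕ) (ha : a < r+1) (b : ℕ) (hb : b < r),
      (a = b ∨ a = b + 1) → vv ⟨a, ha⟩ ∈ ee ⟨b, hb⟩ := by
    intro a ha b hb hab
    rcases hab with rfl | rfl
    · exact hve1 a hb
    · exact hve2 b hb
  have vcng : ∀ (a : ℕ) (ha : a < r+1) (b : ℕ) (hb : b < r+1), a = b → vv ⟨a,ha⟩ = vv ⟨b,hb⟩ := by
    intro a ha b hb hab; subst hab; rfl
  have ecng : ∀ (a : ℕ) (ha : a < r) (b : ℕ) (hb : b < r), a = b → ee ⟨a,ha⟩ = ee ⟨b,hb⟩ := by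
    intro a ha b hb hab; subst hab; rfl
  have hv0' : vv ⟨0, by omega⟩ ∈ h := by
    rw [show (⟨0, by omega⟩ : Fin (r+1)) = 0 from by apply Fin.ext; simp]
    exact hv0
  -- the vertex set of the path
  set S : Finset V := Finset.image vv Finset.univ with hS
  have hScard : S.card = r + 1 := by
    rw [hS, Finset.card_image_of_injective _ hvinj, Finset.card_univ, Fintype.card_fin]
  have hmemS : ∀ x, (∃ i, vv i = x) → x ∈ S := by
    intro x ⟨i, hi⟩
    exact Finset.mem_image.mpr ⟨i, Finset.mem_univ i, hi⟩
  -- h is inside S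
  have hext : ∀ x ∈ h, ∃ i, vv i = x := ext_lemma hmax hP' hh hv0 hnotdef
  have hhsubS : h ⊆ S := fun x hx => hmemS x (hext x hx)
  -- find the missing vertex vv m of h
  have hSd : (S \ h).card = 1 := by
    rw [Finset.card_sdiff_of_subset hhsubS, hScard, hunif h hh]
    omega
  obtain ⟨x0, hx0⟩ := Finset.card_eq_one.mp hSd
  have hx0sd : x0 ∈ S \ h := by rw [hx0]; exact Finset.mem_singleton_self x0
  have hx0S : x0 ∈ S := (Finset.mem_sdiff.mp hx0sd).1
  have hx0nh : x0 ∉ h := (Finset.mem_sdiff.mp hx0sd).2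
  obtain ⟨m, -, hm⟩ := Finset.mem_image.mp hx0S
  have hmem_iff : ∀ i : Fin (r+1), vv i ∈ h ↔ i ≠ m := by
    intro i
    constructor
    · intro hih hieq
      rw [hieq, hm] at hih
      exact hx0nh hih
    · intro hne
      by_contra hnih
      have hmem : vv i ∈ S \ h :=
        Finset.mem_sdiff.mpr ⟨Finset.mem_image.mpr ⟨i, Finset.mem_univ i, rfl⟩, hnih⟩
      rw [hx0] at hmem
      exact hne (hvinj ((Finset.mem_singleton.mp hmem).trans hm.symm))
  have hMpos : 1 ≤ m.val := by
    by_contra hc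
    push_neg at hc
    have hm0 : m = 0 := by apply Fin.ext; simp only [Fin.val_zero]; omega
    exact ((hmem_iff 0).mp hv0) hm0.symm
  have hMr : m.val ≤ r := by have := m.isLt; omega
  have hvh : ∀ (a : ℕ) (ha : a < r+1), a ≠ m.val → vv ⟨a, ha⟩ ∈ h := by
    intro a ha hne
    apply (hmem_iff _).mpr
    intro hceq
    exact hne (congrArg Fin.val hceq)
  have hvmh : vv m ∉ h := fun hc => (hmem_iff m).mp hc rfl
  -- step 2 : edges e_t with t+1 ≠ m are inside S
  have step2 : ∀ (t : ℕ) (ht : t < r), t + 1 ≠ m.val → ∀ x ∈ ee ⟨t, ht⟩, ∃ i, vv i = x := by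
    intro t ht htm
    obtain ⟨w, b, hbp, hw0, hbne, hwr, hbform⟩ :=
      rot_path hP' (t+1) (by omega) (by omega) (ee ⟨0, by omega⟩) h (heE _) hh
        (hve1 0 (by omega)) (hve2 0 (by omega)) hv0' (hvh (t+1) (by omega) htm)
        (hnotdef _)
        (fun h2 hceq => by have := eeq 0 (by omega) (t+1-1) (by omega) hceq; omega)
        (Ne.symm (hnotdef _))
        (fun i hcond => ⟨fun hceq => by have := eeq2 0 (by omega) i hceq.symm; omega, hnotdef i⟩)
    intro x hx
    have hg0' : w 0 ∈ ee ⟨t, ht⟩ := by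
      rw [hw0]; exact hem (t+1-1) (by omega) t ht (by omega)
    have hgne' : ∀ i, b i ≠ ee ⟨t, ht⟩ := fun i hceq =>
      hbne i (hceq.trans (ecng t ht (t+1-1) (by omega) (by omega)))
    obtain ⟨i, hi⟩ := ext_lemma hmax hbp (heE ⟨t, ht⟩) hg0' hgne' x hx
    obtain ⟨i', hi'⟩ := hwr i
    exact ⟨i', by rw [← hi']; exact hi⟩
  -- step 3 : any edge inside S other than h contains vv m
  have hclose : ∀ (g : Finset V), g ∈ E → g ≠ h → (∀ x ∈ g, ∃ i, vv i = x) → vv m ∈ g := by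
    intro g hgE hgh hgsub
    by_contra hnm
    have hmS : vv m ∈ S := Finset.mem_image.mpr ⟨m, Finset.mem_univ m, rfl⟩
    have hsub : g ⊆ S.erase (vv m) := by
      intro x hx
      refine Finset.mem_erase.mpr ⟨?_, hmemS x (hgsub x hx)⟩
      intro hceq; rw [hceq] at hx; exact hnm hx
    have hsub2 : h ⊆ S.erase (vv m) := by
      intro x hx
      refine Finset.mem_erase.mpr ⟨?_, hhsubS hx⟩
      intro hceq; rw [hceq] at hx; exact hvmh hx
    have hcarde : (S.erase (vv m)).card = r := by
      rw [Finset.card_erase_of_mem hmS, hScard]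
      omega
    have hg_eq : g = S.erase (vv m) :=
      Finset.eq_of_subset_of_card_le hsub (by rw [hcarde, hunif g hgE])
    have hh_eq : h = S.erase (vv m) :=
      Finset.eq_of_subset_of_card_le hsub2 (by rw [hcarde, hunif h hh])
    exact hgh (hg_eq.trans hh_eq.symm)
  -- the Q path (for m ≥ 2)
  have hQ : 2 ≤ m.val → ∃ (w : Fin (r+1) → V) (b : Fin r → Finset V),
      IsBergePath E r w b ∧ w 0 = vv ⟨m.val - 1, by omega⟩ ∧
      (∀ k, b k ≠ ee ⟨m.val - 1, by omega⟩) ∧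
      (∀ i, ∃ i', w i = vv i') ∧
      (∀ k, b k = h ∨ b k = ee ⟨0, by omega⟩ ∨ ∃ k', b k = ee k') := by
    intro hM2
    have he0S := step2 0 (by omega) (by omega)
    have hvm0 : vv m ∈ ee ⟨0, by omega⟩ := hclose _ (heE _) (hnotdef _) he0S
    have hvm0' : vv ⟨m.val, by omega⟩ ∈ ee ⟨0, by omega⟩ := by
      rw [show (⟨m.val, by omega⟩ : Fin (r+1)) = m from Fin.ext rfl]
      exact hvm0
    exact rot_path hP' m.val (by omega) hMr h (ee ⟨0, by omega⟩) hh (heE _)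
      hv0' (hvh 1 (by omega) (by omega)) (hve1 0 (by omega)) hvm0'
      (Ne.symm (hnotdef _)) (fun _ => Ne.symm (hnotdef _))
      (fun hceq => by have := eeq 0 (by omega) (m.val - 1) (by omega) hceq; omega)
      (fun i hcond => ⟨hnotdef i, fun hceq => by have := eeq2 0 (by omega) i hceq.symm; omega⟩)
  -- step 4 : the remaining edge e_{m-1} is inside S
  have step4 : ∀ x ∈ ee ⟨m.val - 1, by omega⟩, ∃ i, vv i = x := by
    rcases Nat.lt_or_ge m.val 2 with hM1 | hM2
    · -- m = 1 : cyclic path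
      obtain ⟨w, b, hbp, hw0, hbne, hwr, hbform⟩ :=
        cyc_path (by omega) hP' h hh hv0' (hvh r (by omega) (by omega)) hnotdef
      intro x hx
      have hg0' : w 0 ∈ ee ⟨m.val - 1, by omega⟩ := by
        rw [hw0]; exact hem 1 (by omega) (m.val - 1) (by omega) (by omega)
      have hgne' : ∀ i, b i ≠ ee ⟨m.val - 1, by omega⟩ := fun i hceq =>
        hbne i (hceq.trans (ecng (m.val - 1) (by omega) 0 (by omega) (by omega)))
      obtain ⟨i, hi⟩ := ext_lemma hmax hbp (heE ⟨m.val - 1, by omega⟩) hg0' hgne' x hx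
      obtain ⟨i', hi'⟩ := hwr i
      exact ⟨i', by rw [← hi']; exact hi⟩
    · obtain ⟨w, b, hbp, hw0, hbne, hwr, hbform⟩ := hQ hM2
      intro x hx
      have hg0' : w 0 ∈ ee ⟨m.val - 1, by omega⟩ := by
        rw [hw0]; exact hve1 (m.val - 1) (by omega)
      obtain ⟨i, hi⟩ := ext_lemma hmax hbp (heE ⟨m.val - 1, by omega⟩) hg0' hbne x hx
      obtain ⟨i', hi'⟩ := hwr i
      exact ⟨i', by rw [← hi']; exact hi⟩
  -- all path edges are inside S
  have heeS : ∀ (t : ℕ) (ht : t < r), ∀ x ∈ ee ⟨t, ht⟩, ∃ i, vv i = x := by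
    intro t ht x hx
    by_cases htm : t + 1 = m.val
    · have heq : ee ⟨t, ht⟩ = ee ⟨m.val - 1, by omega⟩ := ecng _ _ _ _ (by omega)
      exact step4 x (heq ▸ hx)
    · exact step2 t ht htm x hx
  -- for each t there is a full-length path ending at vv t using only path edges and h
  have hend : ∀ (t : ℕ) (ht : t < r + 1), ∃ (w : Fin (r+1) → V) (b : Fin r → Finset V),
      IsBergePath E r w b ∧ w 0 = vv ⟨t, ht⟩ ∧ (∀ i, ∃ i', w i = vv i') ∧
      (∀ k, b k = h ∨ ∃ k', b k = ee k') := by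
    intro t ht
    by_cases htr : t = r
    · obtain ⟨w, b, hbp, hw0, hwr, hbform⟩ := rev_path hP'
      exact ⟨w, b, hbp, by rw [hw0]; exact vcng _ _ _ _ (by omega), hwr,
        fun k => Or.inr (hbform k)⟩
    · by_cases htm : t + 1 = m.val
      · rcases Nat.lt_or_ge m.val 2 with hM1 | hM2
        · refine ⟨vv, ee, hP', ?_, fun i => ⟨i, rfl⟩, fun k => Or.inr ⟨k, rfl⟩⟩
          exact congrArg vv (Fin.ext (by simp only [Fin.val_zero]; omega))
        · obtain ⟨w, b, hbp, hw0, hbne, hwr, hbform⟩ := hQ hM2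
          refine ⟨w, b, hbp, ?_, hwr, ?_⟩
          · rw [hw0]; exact vcng _ _ _ _ (by omega)
          · intro k
            rcases hbform k with h1 | h2 | h3
            · exact Or.inl h1
            · exact Or.inr ⟨_, h2⟩
            · exact Or.inr h3
      · obtain ⟨w, b, hbp, hw0, hbne, hwr, hbform⟩ :=
          rot_path hP' (t+1) (by omega) (by omega) (ee ⟨0, by omega⟩) h (heE _) hh
            (hve1 0 (by omega)) (hve2 0 (by omega)) hv0' (hvh (t+1) (by omega) htm)
            (hnotdef _)
            (fun h2 hceq => by have := eeq 0 (by omega) (t+1-1) (by omega) hceq; omega)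
            (Ne.symm (hnotdef _))
            (fun i hcond => ⟨fun hceq => by have := eeq2 0 (by omega) i hceq.symm; omega, hnotdef i⟩)
        refine ⟨w, b, hbp, ?_, hwr, ?_⟩
        · rw [hw0]; exact vcng _ _ _ _ (by omega)
        · intro k
          rcases hbform k with h1 | h2 | h3
          · exact Or.inr ⟨_, h1⟩
          · exact Or.inl h2
          · exact Or.inr h3
  -- step 5 : every edge is inside S
  have hedge : ∀ f ∈ E, ∀ x ∈ f, ∃ i, vv i = x := by
    by_contra hcon
    push_neg at hcon
    obtain ⟨f, hfE, x, hxf, hx⟩ := hcon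
    -- find a crossing edge
    have hcross : ∃ f' ∈ E, (∃ t : Fin (r+1), vv t ∈ f') ∧ ∃ y ∈ f', ∀ i, vv i ≠ y := by
      by_cases hft : ∃ t, vv t ∈ f
      · exact ⟨f, hfE, hft, x, hxf, fun i hi => hx i hi⟩
      · push_neg at hft
        have hxne : x ≠ vv 0 := fun hceq => hx 0 hceq.symm
        obtain ⟨k, u, c, hupath, hu0, hulast⟩ := hconn x (vv 0) hxne
        have hk1 : 1 ≤ k := by
          by_contra hck
          push_neg at hck
          have h0l : (0 : Fin (k+1)) = Fin.last k := Fin.ext (by simp [Fin.val_last]; omega)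
          rw [h0l, hulast] at hu0
          exact hxne hu0.symm
        set T := Finset.univ.filter (fun i : Fin (k+1) => ∃ t, vv t = u i) with hT
        have hTne : T.Nonempty :=
          ⟨Fin.last k, Finset.mem_filter.mpr ⟨Finset.mem_univ _, 0, hulast.symm⟩⟩
        set i0 := T.min' hTne with hi0def
        have hi0 : ∃ t, vv t = u i0 := (Finset.mem_filter.mp (T.min'_mem hTne)).2
        have hi0pos : 0 < i0.val := by
          by_contra hck
          push_neg at hck
          have : i0 = 0 := Fin.ext (by simp only [Fin.val_zero]; omega)
          rw [this, hu0] at hi0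
          obtain ⟨t, ht'⟩ := hi0
          exact hx t ht'
        set p : Fin k := ⟨i0.val - 1, by have := i0.isLt; omega⟩ with hpdef
        have hincp := hupath.2.2.2 p
        have hsucc : p.succ = i0 := Fin.ext (by simp [hpdef, Fin.val_succ]; omega)
        obtain ⟨t, ht'⟩ := hi0
        have hmemc : vv t ∈ c p := by
          have h2 := hincp.2
          rw [hsucc] at h2
          rw [ht']
          exact h2
        have hout : ∀ i, vv i ≠ u p.castSucc := by
          intro i hceq
          have hmemT : p.castSucc ∈ T :=
            Finset.mem_filter.mpr ⟨Finset.mem_univ _, i, hceq⟩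
          have hle := Finset.min'_le T _ hmemT
          have hval := Fin.le_def.mp hle
          simp only [Fin.coe_castSucc, hpdef] at hval
          omega
        exact ⟨c p, hupath.2.2.1 p, ⟨t, hmemc⟩, u p.castSucc, hincp.1, hout⟩
    obtain ⟨f', hf'E, ⟨t, htf⟩, y, hyf, hy⟩ := hcross
    have hfne : ∀ i, ee i ≠ f' := by
      intro i hceq
      have hyi : y ∈ ee ⟨i.val, i.isLt⟩ := by
        rw [show (⟨i.val, i.isLt⟩ : Fin r) = i from Fin.ext rfl, hceq]
        exact hyf
      obtain ⟨i', hi'⟩ := heeS i.val i.isLt y hyi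
      exact hy i' hi'
    have hfnh : h ≠ f' := by
      intro hceq
      obtain ⟨i', hi'⟩ := hext y (by rw [hceq]; exact hyf)
      exact hy i' hi'
    obtain ⟨w, b, hbp, hw0, hwr, hbform⟩ := hend t.val t.isLt
    have hg0' : w 0 ∈ f' := by
      rw [hw0, show (⟨t.val, t.isLt⟩ : Fin (r+1)) = t from Fin.ext rfl]
      exact htf
    have hgne' : ∀ i, b i ≠ f' := by
      intro i hceq
      rcases hbform i with h1 | ⟨k', hk'⟩
      · exact hfnh (h1 ▸ hceq)
      · exact hfne k' (hk' ▸ hceq)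
    obtain ⟨i, hi⟩ := ext_lemma hmax hbp hf'E hg0' hgne' y hyf
    obtain ⟨i', hi'⟩ := hwr i
    exact hy i' (by rw [← hi']; exact hi)
  -- step 6 : vv is surjective
  have hsurj : ∀ x : V, ∃ i, vv i = x := by
    intro x
    by_cases hx0 : x = vv 0
    · exact ⟨0, hx0.symm⟩
    · obtain ⟨k, u, c, hupath, hu0, hulast⟩ := hconn x (vv 0) hx0
      have hk1 : 1 ≤ k := by
        by_contra hck
        push_neg at hck
        have h0l : (0 : Fin (k+1)) = Fin.last k := Fin.ext (by simp [Fin.val_last]; omega)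
        rw [h0l, hulast] at hu0
        exact hx0 hu0.symm
      have hxc : x ∈ c ⟨0, by omega⟩ := by
        have h2 := (hupath.2.2.2 ⟨0, by omega⟩).1
        have h00 : (⟨0, by omega⟩ : Fin k).castSucc = (0 : Fin (k+1)) := by
          apply Fin.ext; simp
        rw [h00, hu0] at h2
        exact h2
      exact hedge _ (hupath.2.2.1 ⟨0, by omega⟩) x hxc
  have hcardV : Fintype.card V = r + 1 := by
    have hbij : Function.Bijective vv := ⟨hvinj, fun x => hsurj x⟩
    have := Fintype.card_of_bijective hbij
    rw [Fintype.card_fin] at this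
    exact this.symm
  refine ⟨hcardV, ?_⟩
  -- step 7 : E is the complete hypergraph
  have hEsub : E ⊆ Finset.univ.powersetCard r := by
    intro f hf
    rw [Finset.mem_powersetCard]
    exact ⟨Finset.subset_univ f, hunif f hf⟩
  set T := insert h (Finset.image ee Finset.univ) with hTdef
  have hTE : T ⊆ E := by
    intro f hf
    rcases Finset.mem_insert.mp hf with rfl | hf2
    · exact hh
    · obtain ⟨i, -, rfl⟩ := Finset.mem_image.mp hf2
      exact heE i
  have hTcard : T.card = r + 1 := by
    rw [hTdef, Finset.card_insert_of_notMem, Finset.card_image_of_injective _ heinj,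
      Finset.card_univ, Fintype.card_fin]
    intro hcmem
    obtain ⟨i, -, hi⟩ := Finset.mem_image.mp hcmem
    exact hnotdef i hi
  have hpcard : (Finset.univ.powersetCard r : Finset (Finset V)).card = r + 1 := by
    rw [Finset.card_powersetCard, Finset.card_univ, hcardV, Nat.choose_succ_self_right]
  have hTeq : T = Finset.univ.powersetCard r :=
    Finset.eq_of_subset_of_card_le (hTE.trans hEsub) (by rw [hTcard, hpcard])
  exact Finset.Subset.antisymm hEsub (hTeq ▸ hTE)
end

section
/- Let H be an r-uniform hypergraph with the property that for every longest Berge path of H, every edge of H containing a terminal vertex of that path is a defining edge of that path. Let P = v0, e1, v1, e2, v2, …, v_{k−1}, e_k, v_k be a longest Berge path and W = {v1, v2, …, v_k}. If v_i ∈ e1 ∩ W and e_i \ W ≠ ∅ for some 1 ≤ i ≤ k, then e_i is the first edge of some Berge path of length k in H, and every edge of H meeting e_i \ W is one of the defining edges e1,…,e_k of P. -/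
namespace Fin

variable {k : ℕ}

def revPrefix (n : Fin (k + 1)) (j : Fin k) : Fin k :=
  if (j : ℕ) < n then ⟨(n : ℕ) - 1 - j, by omega⟩ else j

theorem val_revPrefix (n : Fin (k + 1)) (j : Fin k) :
    (revPrefix n j : ℕ) = if (j : ℕ) < n then (n : ℕ) - 1 - j else j := by
  unfold revPrefix
  split_ifs <;> rfl

theorem revPrefix_involutive (n : Fin (k + 1)) : Function.Involutive (revPrefix n) := by
  intro j
  ext
  simp only [val_revPrefix]
  split_ifs <;> omega

end Fin

namespace IsBergePath

variable {V : Type*} [DecidableEq V] {E : Finset (Finset V)} {k : ℕ}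
  {v : Fin (k + 1) → V} {e : Fin k → Finset V}

theorem mem_of_val (hP : IsBergePath E k v e) {a : Fin (k + 1)} {b : Fin k}
    (h : (a : ℕ) = b ∨ (a : ℕ) = b + 1) : v a ∈ e b := by
  rcases h with h | h
  · obtain rfl : a = b.castSucc := Fin.ext h
    exact (hP.2.2.2 b).1
  · obtain rfl : a = b.succ := Fin.ext h
    exact (hP.2.2.2 b).2

theorem reversePrefix (hP : IsBergePath E k v e) (i : Fin k) (hi : v i.succ ∈ e ⟨0, i.pos⟩)
    {u : V} (hu : u ∈ e i) (hfresh : ∀ j : Fin k, v j.succ ≠ u) :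
    IsBergePath E k (Fin.cons u (v ∘ Fin.succ ∘ Fin.revPrefix i.castSucc))
      (e ∘ Fin.revPrefix i.succ) := by
  refine ⟨?_, hP.2.1.comp (Fin.revPrefix_involutive _).injective, fun j => hP.2.2.1 _,
    fun j => ⟨?_, ?_⟩⟩
  · refine Fin.cons_injective_iff.2 ⟨?_, ?_⟩
    · rintro ⟨j, hj⟩
      exact hfresh _ hj
    · exact hP.1.comp ((Fin.succ_injective _).comp (Fin.revPrefix_involutive _).injective)
  · by_cases hj : (j : ℕ) = 0
    · obtain rfl : j = ⟨0, i.pos⟩ := Fin.ext hj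
      simpa [Fin.revPrefix] using hu
    · have hcast : j.castSucc = (⟨j - 1, by omega⟩ : Fin k).succ := by ext; simp; omega
      rw [hcast, Fin.cons_succ]
      refine hP.mem_of_val ?_
      simp only [Function.comp_apply, Fin.val_succ, Fin.val_revPrefix, Fin.val_castSucc]
      split_ifs <;> omega
  · simp only [Fin.cons_succ, Function.comp_apply]
    by_cases hji : (j : ℕ) = i
    · -- the reversed prefix ends with `e 0`, which `hi` joins to the unchanged suffix
      obtain rfl : j = i := Fin.ext hji
      simpa [Fin.revPrefix] using hi
    · refine hP.mem_of_val ?_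
      simp only [Fin.val_succ, Fin.val_revPrefix, Fin.val_castSucc]
      split_ifs <;> omega

end IsBergePath

theorem stmt13_general {V : Type*} [DecidableEq V]
    (k : ℕ) (hk : 0 < k)
    (E : Finset (Finset V))
    (hterm : ∀ (v : Fin (k + 1) → V) (e : Fin k → Finset V), IsBergePath E k v e →
      ∀ h ∈ E, (v 0 ∈ h ∨ v (Fin.last k) ∈ h) → ∃ i, e i = h)
    (vv : Fin (k + 1) → V) (ee : Fin k → Finset V)
    (hP : IsBergePath E k vv ee)
    (W : Finset V) (hW : W = Finset.image (fun i : Fin k => vv i.succ) Finset.univ)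
    (i : Fin k) (hie : vv i.succ ∈ ee ⟨0, hk⟩ ∩ W) (hsub : (ee i \ W).Nonempty) :
    (∃ (v' : Fin (k + 1) → V) (e' : Fin k → Finset V),
        IsBergePath E k v' e' ∧ e' ⟨0, hk⟩ = ee i) ∧
      ∀ h ∈ E, (h ∩ (ee i \ W)).Nonempty → ∃ j, ee j = h := by
  have hpath : ∀ u ∈ ee i \ W, IsBergePath E k
      (Fin.cons u (vv ∘ Fin.succ ∘ Fin.revPrefix i.castSucc)) (ee ∘ Fin.revPrefix i.succ) := by
    intro u hu
    rw [Finset.mem_sdiff, hW] at hu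
    exact hP.reversePrefix i (Finset.mem_inter.1 hie).1 hu.1
      fun j hj => hu.2 (Finset.mem_image.2 ⟨j, Finset.mem_univ _, hj⟩)
  refine ⟨?_, fun h hE ⟨u, hu⟩ => ?_⟩
  · obtain ⟨u, hu⟩ := hsub
    refine ⟨_, _, hpath u hu, congrArg ee (Fin.ext ?_)⟩
    simp [Fin.val_revPrefix]
  · obtain ⟨j, hj⟩ := hterm _ _ (hpath u (Finset.mem_inter.1 hu).2) h hE
      (Or.inl (Finset.mem_inter.1 hu).1)
    exact ⟨_, hj⟩

/-- Lemma 6(ii): in the same setting, if `v_i ∈ e_1 ∩ W` and `e_i \ W ≠ ∅`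
(index `i : Fin k` encodes the paper's index `i+1`), then `e_i` is the first edge of
some Berge path of length `k`, and every edge of `H` meeting `e_i \ W` is a defining
edge of `P`. -/
theorem stmt13 {V : Type*} [Fintype V] [DecidableEq V]
    (r k : ℕ) (hk : 0 < k)
    (E : Finset (Finset V)) (hunif : ∀ e ∈ E, e.card = r)
    (hmax : ∀ (m : ℕ) (v : Fin (m + 1) → V) (e : Fin m → Finset V),
      IsBergePath E m v e → m ≤ k)
    (hterm : ∀ (v : Fin (k + 1) → V) (e : Fin k → Finset V), IsBergePath E k v e →
      ∀ h ∈ E, (v 0 ∈ h ∨ v (Fin.last k) ∈ h) → ∃ i, e i = h)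
    (vv : Fin (k + 1) → V) (ee : Fin k → Finset V)
    (hP : IsBergePath E k vv ee)
    (W : Finset V) (hW : W = Finset.image (fun i : Fin k => vv i.succ) Finset.univ)
    (i : Fin k) (hie : vv i.succ ∈ ee ⟨0, hk⟩ ∩ W) (hsub : (ee i \ W).Nonempty) :
    (∃ (v' : Fin (k + 1) → V) (e' : Fin k → Finset V),
        IsBergePath E k v' e' ∧ e' ⟨0, hk⟩ = ee i) ∧
      ∀ h ∈ E, (h ∩ (ee i \ W)).Nonempty → ∃ j, ee j = h :=
  stmt13_general k hk E hterm vv ee hP W hW i hie hsub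
end

section
/- Let H be an r-uniform hypergraph with the property that for every longest Berge path of H, every edge of H containing a terminal vertex of that path is a defining edge of that path. Let P = v0, e1, v1, e2, v2, …, v_{k−1}, e_k, v_k be a longest Berge path and W = {v1, v2, …, v_k}. If v_i ∈ e1 ∩ W and (e_i ∩ e_j) \ W ≠ ∅ for some 1 ≤ i < j ≤ k, then every edge of H containing v_{j−1} is one of the defining edges e1,…,e_k of P. -/
/-- Lemma 6(iii): in the same setting, if `v_i ∈ e_1 ∩ W` and
`(e_i ∩ e_j) \ W ≠ ∅` for some `1 ≤ i < j ≤ k` (indices `i j : Fin k` encode the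
paper's indices `i+1 < j+1`, so paper `v_{j-1} = vv j.castSucc`), then every edge of
`H` containing `v_{j-1}` is a defining edge of `P`. -/
theorem stmt14 {V : Type*} [Fintype V] [DecidableEq V]
    (r k : ℕ) (hk : 0 < k)
    (E : Finset (Finset V)) (hunif : ∀ e ∈ E, e.card = r)
    (hmax : ∀ (m : ℕ) (v : Fin (m + 1) → V) (e : Fin m → Finset V),
      IsBergePath E m v e → m ≤ k)
    (hterm : ∀ (v : Fin (k + 1) → V) (e : Fin k → Finset V), IsBergePath E k v e →
      ∀ h ∈ E, (v 0 ∈ h ∨ v (Fin.last k) ∈ h) → ∃ i, e i = h)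
    (vv : Fin (k + 1) → V) (ee : Fin k → Finset V)
    (hP : IsBergePath E k vv ee)
    (W : Finset V) (hW : W = Finset.image (fun i : Fin k => vv i.succ) Finset.univ)
    (i j : Fin k) (hij : i < j)
    (hie : vv i.succ ∈ ee ⟨0, hk⟩ ∩ W)
    (hmeet : ((ee i ∩ ee j) \ W).Nonempty) :
    ∀ h ∈ E, vv j.castSucc ∈ h → ∃ l, ee l = h := by
  classical
  intro h hE hvh
  obtain ⟨hvinj, heinj, hmemE, hinc⟩ := hP
  obtain ⟨u, hu⟩ := hmeet
  rw [Finset.mem_sdiff, Finset.mem_inter] at hu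
  obtain ⟨⟨hui, huj⟩, huW⟩ := hu
  have hik : (i : ℕ) < k := i.isLt
  have hjk : (j : ℕ) < k := j.isLt
  have hij' : (i : ℕ) < (j : ℕ) := hij
  -- membership in W
  have hmemW : ∀ (s : ℕ) (hs : s < k + 1), 1 ≤ s → vv ⟨s, hs⟩ ∈ W := by
    intro s hs h1
    rw [hW, Finset.mem_image]
    exact ⟨⟨s - 1, by omega⟩, Finset.mem_univ _, by congr 1; apply Fin.ext; simp; omega⟩
  have hWcard : W.card = k := by
    rw [hW, Finset.card_image_of_injective _
      (fun x y hxy => Fin.succ_injective _ (hvinj hxy))]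
    simp
  -- incidence helpers
  have Hinc1 : ∀ (X Y : ℕ) (hX : X < k + 1) (hY : Y < k), X = Y →
      vv ⟨X, hX⟩ ∈ ee ⟨Y, hY⟩ := by
    intro X Y hX hY hXY; subst hXY; exact (hinc ⟨X, hY⟩).1
  have Hinc2 : ∀ (X Y : ℕ) (hX : X < k + 1) (hY : Y < k), X = Y + 1 →
      vv ⟨X, hX⟩ ∈ ee ⟨Y, hY⟩ := by
    intro X Y hX hY hXY; subst hXY; exact (hinc ⟨Y, hY⟩).2
  -- the rotated path
  set w : Fin (k + 1) → V := fun t =>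
    if (t : ℕ) = (j : ℕ) then u
    else if (t : ℕ) + (i : ℕ) < (j : ℕ) then vv ⟨(j : ℕ) - (t : ℕ), by omega⟩
    else if (t : ℕ) < (j : ℕ) then
      vv ⟨(t : ℕ) + (i : ℕ) + 1 - (j : ℕ), by have := t.isLt; omega⟩
    else vv t with hwdef
  set f : Fin k → Finset V := fun t =>
    if (t : ℕ) + (i : ℕ) + 1 < (j : ℕ) then ee ⟨(j : ℕ) - (t : ℕ) - 1, by omega⟩
    else if (t : ℕ) + (i : ℕ) + 1 = (j : ℕ) then ee ⟨0, hk⟩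
    else if (t : ℕ) + 1 < (j : ℕ) then
      ee ⟨(t : ℕ) + (i : ℕ) + 1 - (j : ℕ), by have := t.isLt; omega⟩
    else if (t : ℕ) + 1 = (j : ℕ) then ee i
    else if (t : ℕ) = (j : ℕ) then ee j
    else ee t with hfdef
  -- characterizations of w
  have hwu : ∀ t : Fin (k + 1), (t : ℕ) = (j : ℕ) → w t = u := by
    intro t ht; simp only [hwdef]; rw [if_pos ht]
  have hw1 : ∀ t : Fin (k + 1), (t : ℕ) + (i : ℕ) < (j : ℕ) →
      w t = vv ⟨(j : ℕ) - (t : ℕ), by omega⟩ := by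
    intro t ht; simp only [hwdef]; rw [if_neg (by omega), if_pos ht]
  have hw2 : ∀ t : Fin (k + 1), (j : ℕ) ≤ (t : ℕ) + (i : ℕ) → (t : ℕ) < (j : ℕ) →
      w t = vv ⟨(t : ℕ) + (i : ℕ) + 1 - (j : ℕ), by have := t.isLt; omega⟩ := by
    intro t h1 h2; simp only [hwdef]; rw [if_neg (by omega), if_neg (by omega), if_pos h2]
  have hw3 : ∀ t : Fin (k + 1), (j : ℕ) < (t : ℕ) → w t = vv t := by
    intro t ht; simp only [hwdef]
    rw [if_neg (by omega), if_neg (by omega), if_neg (by omega)]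
  -- characterizations of f
  have hf1 : ∀ t : Fin k, (t : ℕ) + (i : ℕ) + 1 < (j : ℕ) →
      f t = ee ⟨(j : ℕ) - (t : ℕ) - 1, by omega⟩ := by
    intro t ht; simp only [hfdef]; rw [if_pos ht]
  have hf2 : ∀ t : Fin k, (t : ℕ) + (i : ℕ) + 1 = (j : ℕ) → f t = ee ⟨0, hk⟩ := by
    intro t ht; simp only [hfdef]; rw [if_neg (by omega), if_pos ht]
  have hf3 : ∀ t : Fin k, (j : ℕ) < (t : ℕ) + (i : ℕ) + 1 → (t : ℕ) + 1 < (j : ℕ) →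
      f t = ee ⟨(t : ℕ) + (i : ℕ) + 1 - (j : ℕ), by have := t.isLt; omega⟩ := by
    intro t h1 h2; simp only [hfdef]
    rw [if_neg (by omega), if_neg (by omega), if_pos h2]
  have hf4 : ∀ t : Fin k, (j : ℕ) < (t : ℕ) + (i : ℕ) + 1 → (t : ℕ) + 1 = (j : ℕ) →
      f t = ee i := by
    intro t h1 h2; simp only [hfdef]
    rw [if_neg (by omega), if_neg (by omega), if_neg (by omega), if_pos h2]
  have hf5 : ∀ t : Fin k, (t : ℕ) = (j : ℕ) → f t = ee j := by
    intro t ht; simp only [hfdef]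
    rw [if_neg (by omega), if_neg (by omega), if_neg (by omega), if_neg (by omega),
      if_pos ht]
  have hf6 : ∀ t : Fin k, (j : ℕ) < (t : ℕ) → f t = ee t := by
    intro t ht; simp only [hfdef]
    rw [if_neg (by omega), if_neg (by omega), if_neg (by omega), if_neg (by omega),
      if_neg (by omega)]
  -- every defining edge of the new path is a defining edge of P
  have hfkey : ∀ t : Fin k, ∃ m : Fin k, f t = ee m := by
    intro t; simp only [hfdef]
    split_ifs <;> exact ⟨_, rfl⟩
  -- f hits every ee m
  have hfsurj : ∀ m : Fin k, ∃ t : Fin k, f t = ee m := by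
    intro m
    rcases (by omega : (m : ℕ) = 0 ∨ (1 ≤ (m : ℕ) ∧ (m : ℕ) < (i : ℕ)) ∨
        ((m : ℕ) = (i : ℕ) ∧ 1 ≤ (i : ℕ)) ∨ ((i : ℕ) < (m : ℕ) ∧ (m : ℕ) < (j : ℕ)) ∨
        (m : ℕ) = (j : ℕ) ∨ (j : ℕ) < (m : ℕ)) with hm | hm | hm | hm | hm | hm
    · refine ⟨⟨(j : ℕ) - (i : ℕ) - 1, by omega⟩, ?_⟩
      rw [hf2 _ (show (j : ℕ) - (i : ℕ) - 1 + (i : ℕ) + 1 = (j : ℕ) by omega)]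
      congr 1; apply Fin.ext; simp [hm.symm]
    · refine ⟨⟨(m : ℕ) + (j : ℕ) - (i : ℕ) - 1, by omega⟩, ?_⟩
      rw [hf3 _ (show (j:ℕ) < ((m : ℕ) + (j : ℕ) - (i : ℕ) - 1) + (i:ℕ) + 1 by omega)
        (show ((m : ℕ) + (j : ℕ) - (i : ℕ) - 1) + 1 < (j:ℕ) by omega)]
      congr 1; apply Fin.ext; simp; omega
    · refine ⟨⟨(j : ℕ) - 1, by omega⟩, ?_⟩
      rw [hf4 _ (show (j:ℕ) < ((j : ℕ) - 1) + (i:ℕ) + 1 by omega)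
        (show ((j : ℕ) - 1) + 1 = (j:ℕ) by omega)]
      congr 1; apply Fin.ext; omega
    · refine ⟨⟨(j : ℕ) - (m : ℕ) - 1, by omega⟩, ?_⟩
      rw [hf1 _ (show ((j : ℕ) - (m : ℕ) - 1) + (i:ℕ) + 1 < (j:ℕ) by omega)]
      congr 1; apply Fin.ext; simp; omega
    · refine ⟨⟨(j : ℕ), hjk⟩, ?_⟩
      rw [hf5 _ rfl]
      congr 1; apply Fin.ext; omega
    · exact ⟨m, hf6 m hm⟩
  -- injectivity of f
  have hfinj : Function.Injective f := by
    have him : Finset.univ.image f = Finset.univ.image ee := by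
      apply Finset.Subset.antisymm
      · intro x hx
        rw [Finset.mem_image] at hx ⊢
        obtain ⟨t, -, ht⟩ := hx
        obtain ⟨m, hm⟩ := hfkey t
        exact ⟨m, Finset.mem_univ _, by rw [← hm, ht]⟩
      · intro x hx
        rw [Finset.mem_image] at hx ⊢
        obtain ⟨m, -, hm⟩ := hx
        obtain ⟨t, ht⟩ := hfsurj m
        exact ⟨t, Finset.mem_univ _, by rw [ht, hm]⟩
    have hcard : (Finset.univ.image f).card = (Finset.univ : Finset (Fin k)).card := by
      rw [him, Finset.card_image_of_injective _ heinj]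
    have h3 := Finset.card_image_iff.mp hcard
    rw [Finset.coe_univ] at h3
    exact Set.injOn_univ.mp h3
  -- values of w
  have hwkey : ∀ t : Fin (k + 1), w t ∈ insert u W := by
    intro t; simp only [hwdef]
    split_ifs with h0 h1 h2
    · exact Finset.mem_insert_self _ _
    · exact Finset.mem_insert_of_mem (hmemW _ _ (by omega))
    · exact Finset.mem_insert_of_mem (hmemW _ _ (by omega))
    · exact Finset.mem_insert_of_mem (hmemW (t : ℕ) t.isLt (by omega))
  have hwsurj : ∀ x ∈ insert u W, ∃ t : Fin (k + 1), w t = x := by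
    intro x hx
    rcases Finset.mem_insert.mp hx with hx | hx
    · exact ⟨⟨(j : ℕ), by omega⟩, by rw [hwu _ rfl, hx]⟩
    · rw [hW, Finset.mem_image] at hx
      obtain ⟨m, -, hm⟩ := hx
      rcases (by omega : ((m : ℕ) + 1 ≤ (i : ℕ)) ∨
          ((i : ℕ) < (m : ℕ) + 1 ∧ (m : ℕ) + 1 ≤ (j : ℕ)) ∨ ((j : ℕ) < (m : ℕ) + 1))
          with hc | hc | hc
      · refine ⟨⟨(m : ℕ) + (j : ℕ) - (i : ℕ), by omega⟩, ?_⟩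
        rw [hw2 _ (show (j:ℕ) ≤ ((m : ℕ) + (j : ℕ) - (i : ℕ)) + (i:ℕ) by omega)
          (show ((m : ℕ) + (j : ℕ) - (i : ℕ)) < (j:ℕ) by omega), ← hm]
        congr 1; apply Fin.ext; simp; omega
      · refine ⟨⟨(j : ℕ) - (m : ℕ) - 1, by omega⟩, ?_⟩
        rw [hw1 _ (show ((j : ℕ) - (m : ℕ) - 1) + (i:ℕ) < (j:ℕ) by omega), ← hm]
        congr 1; apply Fin.ext; simp; omega
      · refine ⟨⟨(m : ℕ) + 1, by omega⟩, ?_⟩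
        rw [hw3 _ (show (j:ℕ) < (m : ℕ) + 1 by omega), ← hm]
        rfl
  -- injectivity of w
  have hwinj : Function.Injective w := by
    have him : Finset.univ.image w = insert u W := by
      apply Finset.Subset.antisymm
      · intro x hx
        rw [Finset.mem_image] at hx
        obtain ⟨t, -, ht⟩ := hx
        exact ht ▸ hwkey t
      · intro x hx
        rw [Finset.mem_image]
        obtain ⟨t, ht⟩ := hwsurj x hx
        exact ⟨t, Finset.mem_univ _, ht⟩
    have hcard : (Finset.univ.image w).card =
        (Finset.univ : Finset (Fin (k + 1))).card := by
      rw [him, Finset.card_insert_of_notMem huW, hWcard, Finset.card_univ,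
        Fintype.card_fin]
    have h3 := Finset.card_image_iff.mp hcard
    rw [Finset.coe_univ] at h3
    exact Set.injOn_univ.mp h3
  -- incidences
  have hincid : ∀ t : Fin k, w t.castSucc ∈ f t ∧ w t.succ ∈ f t := by
    intro t
    have htk : (t : ℕ) < k := t.isLt
    rcases (by omega : ((t:ℕ) + (i:ℕ) + 1 < (j:ℕ)) ∨ ((t:ℕ) + (i:ℕ) + 1 = (j:ℕ)) ∨
        ((j:ℕ) < (t:ℕ) + (i:ℕ) + 1 ∧ (t:ℕ) + 1 < (j:ℕ)) ∨
        ((j:ℕ) < (t:ℕ) + (i:ℕ) + 1 ∧ (t:ℕ) + 1 = (j:ℕ)) ∨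
        ((t:ℕ) = (j:ℕ)) ∨ ((j:ℕ) < (t:ℕ))) with hr | hr | hr | hr | hr | hr
    · rw [hf1 t hr]
      constructor
      · rw [hw1 t.castSucc (show (t:ℕ) + (i:ℕ) < (j:ℕ) by omega)]
        exact Hinc2 _ _ _ _ (by simp only [Fin.coe_castSucc]; omega)
      · rw [hw1 t.succ (show ((t:ℕ) + 1) + (i:ℕ) < (j:ℕ) by omega)]
        exact Hinc1 _ _ _ _ (by simp only [Fin.val_succ]; omega)
    · rw [hf2 t hr]
      constructor
      · rw [hw1 t.castSucc (show (t:ℕ) + (i:ℕ) < (j:ℕ) by omega)]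
        have hie' := (Finset.mem_inter.mp hie).1
        convert hie' using 2
        apply Fin.ext
        simp only [Fin.coe_castSucc, Fin.val_succ]; omega
      · by_cases hi0 : (i : ℕ) = 0
        · rw [hwu t.succ (show (t:ℕ) + 1 = (j:ℕ) by omega)]
          have : i = ⟨0, hk⟩ := Fin.ext hi0
          rw [← this]; exact hui
        · rw [hw2 t.succ (show (j:ℕ) ≤ ((t:ℕ) + 1) + (i:ℕ) by omega)
            (show (t:ℕ) + 1 < (j:ℕ) by omega)]
          exact Hinc2 _ _ _ _ (by simp only [Fin.val_succ]; omega)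
    · rw [hf3 t hr.1 hr.2]
      constructor
      · rw [hw2 t.castSucc (show (j:ℕ) ≤ (t:ℕ) + (i:ℕ) by omega)
          (show (t:ℕ) < (j:ℕ) by omega)]
        exact Hinc1 _ _ _ _ (by simp only [Fin.coe_castSucc])
      · rw [hw2 t.succ (show (j:ℕ) ≤ ((t:ℕ) + 1) + (i:ℕ) by omega)
          (show (t:ℕ) + 1 < (j:ℕ) by omega)]
        exact Hinc2 _ _ _ _ (by simp only [Fin.val_succ]; omega)
    · rw [hf4 t hr.1 hr.2]
      constructor
      · rw [hw2 t.castSucc (show (j:ℕ) ≤ (t:ℕ) + (i:ℕ) by omega)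
          (show (t:ℕ) < (j:ℕ) by omega)]
        exact Hinc1 _ _ _ i.isLt (by simp only [Fin.coe_castSucc]; omega)
      · rw [hwu t.succ (show (t:ℕ) + 1 = (j:ℕ) by omega)]
        exact hui
    · have ht : t = j := Fin.ext hr
      subst ht
      rw [hf5 t rfl]
      constructor
      · rw [hwu t.castSucc rfl]
        exact huj
      · rw [hw3 t.succ (show (t:ℕ) < (t:ℕ) + 1 by omega)]
        exact (hinc t).2
    · rw [hf6 t hr]
      constructor
      · rw [hw3 t.castSucc (show (j:ℕ) < (t:ℕ) by omega)]
        exact (hinc t).1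
      · rw [hw3 t.succ (show (j:ℕ) < (t:ℕ) + 1 by omega)]
        exact (hinc t).2
  have hpath : IsBergePath E k w f :=
    ⟨hwinj, hfinj, fun t => by obtain ⟨m, hm⟩ := hfkey t; rw [hm]; exact hmemE m, hincid⟩
  have hw0 : w 0 = vv j.castSucc := by
    rw [hw1 0 (by simp; omega)]
    congr 1
  obtain ⟨l, hl⟩ := hterm w f hpath h hE (Or.inl (by rw [hw0]; exact hvh))
  obtain ⟨m, hm⟩ := hfkey l
  exact ⟨m, by rw [← hm, hl]⟩
end

section
/- Let H be an r-uniform hypergraph with the property that for every longest Berge path of H, every edge of H containing a terminal vertex of that path is a defining edge of that path. Let P = v0, e1, v1, e2, v2, …, v_{k−1}, e_k, v_k be a longest Berge path and W = {v1, v2, …, v_k}. If v_j ∈ e1 ∩ W and (e_i ∩ e_j) \ W ≠ ∅ for some 1 ≤ i < j ≤ k, then every edge of H containing v_i is one of the defining edges e1,…,e_k of P. -/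
/-! Index the path as `v 0, e 0, v 1, …, e (k-1), v k` and let `u ∈ (e i ∩ e j) \ W`, so that
`u` differs from `v 1, …, v k`; replace `v 0` by `u`. Since `v (j+1) ∈ e 0`, the sequence
`v k, e (k-1), …, e (j+1), v (j+1), e 0, v 1, e 1, …, v i, e i, u, e j, v j, e (j-1), …, v (i+1)`
is again a Berge path with `k` edges, all of them edges of `P`. It is therefore a longest path
with terminal vertex `v (i+1)`, and the hypothesis on longest paths applies to it. -/

/-- Position `t` of the rerouted path carries vertex index `rerouteVertex k i j t`, where index `0`
stands for `u`. -/
def rerouteVertex (k i j t : ℕ) : ℕ :=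
  if t + j + 1 ≤ k then k - t
  else if t + j + 1 ≤ k + i then t + j + 1 - k
  else if t + j = k + i then 0
  else k + i + 1 - t

def rerouteEdge (k i j t : ℕ) : ℕ :=
  if t + j + 1 < k then k - 1 - t
  else if t + j + 1 ≤ k + i then t + j + 1 - k
  else k + i - t

/-- Vertex index `s` lies in edge index `l` of the path with `v 0` replaced by `u`: the incidences
of `P` away from `v 0`, and the three chords `u ∈ e i`, `u ∈ e j`, `v (j+1) ∈ e 0`. -/
def RerouteIncident (i j s l : ℕ) : Prop :=
  s = l + 1 ∨ (s = l ∧ s ≠ 0) ∨ (s = 0 ∧ (l = i ∨ l = j)) ∨ (s = j + 1 ∧ l = 0)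

section RerouteIndex

variable {k i j : ℕ}

theorem rerouteVertex_le (hij : i < j) (hjk : j < k) (t : ℕ) : rerouteVertex k i j t ≤ k := by
  unfold rerouteVertex; split_ifs <;> omega

theorem rerouteEdge_lt (hij : i < j) (hjk : j < k) (t : ℕ) : rerouteEdge k i j t < k := by
  unfold rerouteEdge; split_ifs <;> omega

theorem rerouteVertex_self (hij : i < j) : rerouteVertex k i j k = i + 1 := by
  unfold rerouteVertex; split_ifs <;> omega

theorem rerouteVertex_injOn (hij : i < j) : Set.InjOn (rerouteVertex k i j) (Set.Iic k) := by
  intro s hs t ht h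
  simp only [Set.mem_Iic] at hs ht
  unfold rerouteVertex at h; split_ifs at h <;> omega

theorem rerouteEdge_injOn : Set.InjOn (rerouteEdge k i j) (Set.Iio k) := by
  intro s hs t ht h
  simp only [Set.mem_Iio] at hs ht
  unfold rerouteEdge at h; split_ifs at h <;> omega

theorem rerouteIncident_vertex (hij : i < j) {t : ℕ} (ht : t < k) :
    RerouteIncident i j (rerouteVertex k i j t) (rerouteEdge k i j t) := by
  unfold RerouteIncident rerouteVertex rerouteEdge; split_ifs <;> omega

theorem rerouteIncident_vertex_succ (hij : i < j) {t : ℕ} (ht : t < k) :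
    RerouteIncident i j (rerouteVertex k i j (t + 1)) (rerouteEdge k i j t) := by
  unfold RerouteIncident rerouteVertex rerouteEdge; split_ifs <;> omega

end RerouteIndex

section BergePath

variable {V : Type*} [DecidableEq V] {E : Finset (Finset V)}

theorem IsBergePath.comp {n m : ℕ} {v : Fin (n + 1) → V} {e : Fin n → Finset V}
    (hP : IsBergePath E n v e) {w : Fin (n + 1) → V} (hw : Function.Injective w)
    {σ : Fin (m + 1) → Fin (n + 1)} {τ : Fin m → Fin n}
    (hσ : Function.Injective σ) (hτ : Function.Injective τ)
    (hinc : ∀ t, w (σ t.castSucc) ∈ e (τ t) ∧ w (σ t.succ) ∈ e (τ t)) :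
    IsBergePath E m (w ∘ σ) (e ∘ τ) :=
  ⟨hw.comp hσ, hP.2.1.comp hτ, fun t => hP.2.2.1 (τ t), hinc⟩

variable {k : ℕ} {v : Fin (k + 1) → V} {e : Fin k → Finset V} {u : V}

theorem IsBergePath.injective_update_zero (hP : IsBergePath E k v e)
    (hu : ∀ t : Fin k, v t.succ ≠ u) : Function.Injective (Function.update v 0 u) := by
  rw [← Fin.cons_self_tail v, Fin.update_cons_zero]
  exact Fin.cons_injective_of_injective (fun ⟨t, ht⟩ => hu t ht)
    (hP.1.comp (Fin.succ_injective _))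

theorem IsBergePath.update_zero_mem_of_rerouteIncident (hP : IsBergePath E k v e)
    {i j : Fin k} (hui : u ∈ e i) (huj : u ∈ e j) (hj0 : v j.succ ∈ e ⟨0, i.pos⟩)
    {s : Fin (k + 1)} {l : Fin k} (h : RerouteIncident i j s l) :
    Function.update v 0 u s ∈ e l := by
  rcases h with h | ⟨h, hs⟩ | ⟨hs, hl | hl⟩ | ⟨hs, hl⟩
  · obtain rfl : s = l.succ := Fin.ext h
    simpa [Function.update_of_ne (Fin.succ_ne_zero l)] using (hP.2.2.2 l).2
  · have hs0 : s ≠ 0 := fun h0 => hs (by simp [h0])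
    obtain rfl : s = l.castSucc := Fin.ext h
    simpa [Function.update_of_ne hs0] using (hP.2.2.2 l).1
  · obtain rfl : s = 0 := Fin.ext hs
    obtain rfl : l = i := Fin.ext hl
    simpa using hui
  · obtain rfl : s = 0 := Fin.ext hs
    obtain rfl : l = j := Fin.ext hl
    simpa using huj
  · obtain rfl : s = j.succ := Fin.ext hs
    obtain rfl : l = ⟨0, i.pos⟩ := Fin.ext hl
    simpa [Function.update_of_ne (Fin.succ_ne_zero j)] using hj0

theorem IsBergePath.exists_reroute (hP : IsBergePath E k v e) {i j : Fin k} (hij : i < j)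
    (hj0 : v j.succ ∈ e ⟨0, i.pos⟩) (hui : u ∈ e i) (huj : u ∈ e j)
    (hu : ∀ t : Fin k, v t.succ ≠ u) :
    ∃ (w : Fin (k + 1) → V) (τ : Fin k → Fin k),
      IsBergePath E k w (e ∘ τ) ∧ w (Fin.last k) = v i.succ := by
  let σ : Fin (k + 1) → Fin (k + 1) := fun t =>
    ⟨rerouteVertex k i j t, Nat.lt_succ_of_le (rerouteVertex_le hij j.2 t)⟩
  let τ : Fin k → Fin k := fun t => ⟨rerouteEdge k i j t, rerouteEdge_lt hij j.2 t⟩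
  have hσ : Function.Injective σ := fun s t h =>
    Fin.ext (rerouteVertex_injOn hij (Fin.is_le s) (Fin.is_le t) (Fin.val_eq_of_eq h))
  have hτ : Function.Injective τ := fun s t h =>
    Fin.ext (rerouteEdge_injOn s.2 t.2 (Fin.val_eq_of_eq h))
  have hlast : σ (Fin.last k) = i.succ := Fin.ext (rerouteVertex_self hij)
  refine ⟨Function.update v 0 u ∘ σ, τ,
    hP.comp (hP.injective_update_zero hu) hσ hτ fun t => ⟨?_, ?_⟩, ?_⟩
  · exact hP.update_zero_mem_of_rerouteIncident hui huj hj0 (rerouteIncident_vertex hij t.2)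
  · exact hP.update_zero_mem_of_rerouteIncident hui huj hj0
      (rerouteIncident_vertex_succ hij t.2)
  · simp [hlast]

end BergePath

/-- The paper's indices `i < j` are `i.succ < j.succ` here: its `v_i`, `e_i` are `vv i.succ`,
`ee i`. -/
theorem stmt15_general {V : Type*} [DecidableEq V]
    (k : ℕ) (hk : 0 < k)
    (E : Finset (Finset V))
    (hterm : ∀ (v : Fin (k + 1) → V) (e : Fin k → Finset V), IsBergePath E k v e →
      ∀ h ∈ E, (v 0 ∈ h ∨ v (Fin.last k) ∈ h) → ∃ i, e i = h)
    (vv : Fin (k + 1) → V) (ee : Fin k → Finset V)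
    (hP : IsBergePath E k vv ee)
    (W : Finset V) (hW : W = Finset.image (fun i : Fin k => vv i.succ) Finset.univ)
    (i j : Fin k) (hij : i < j)
    (hje : vv j.succ ∈ ee ⟨0, hk⟩ ∩ W)
    (hmeet : ((ee i ∩ ee j) \ W).Nonempty) :
    ∀ h ∈ E, vv i.succ ∈ h → ∃ l, ee l = h := by
  intro h hh hih
  obtain ⟨u, hu⟩ := hmeet
  rw [Finset.mem_sdiff, Finset.mem_inter] at hu
  have hvu : ∀ t : Fin k, vv t.succ ≠ u := fun t ht =>
    hu.2 (hW ▸ Finset.mem_image.2 ⟨t, Finset.mem_univ t, ht⟩)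
  obtain ⟨w, τ, hQ, hw⟩ :=
    hP.exists_reroute hij (Finset.mem_inter.1 hje).1 hu.1.1 hu.1.2 hvu
  obtain ⟨l, hl⟩ := hterm w _ hQ h hh (Or.inr (hw ▸ hih))
  exact ⟨τ l, hl⟩

/-- Lemma 6(iv): in the same setting, if `v_j ∈ e_1 ∩ W` and
`(e_i ∩ e_j) \ W ≠ ∅` for some `1 ≤ i < j ≤ k` (indices `i j : Fin k` encode the
paper's indices `i+1 < j+1`, so paper `v_i = vv i.succ`), then every edge of `H`
containing `v_i` is a defining edge of `P`. -/
theorem stmt15 {V : Type*} [Fintype V] [DecidableEq V]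
    (r k : ℕ) (hk : 0 < k)
    (E : Finset (Finset V)) (hunif : ∀ e ∈ E, e.card = r)
    (hmax : ∀ (m : ℕ) (v : Fin (m + 1) → V) (e : Fin m → Finset V),
      IsBergePath E m v e → m ≤ k)
    (hterm : ∀ (v : Fin (k + 1) → V) (e : Fin k → Finset V), IsBergePath E k v e →
      ∀ h ∈ E, (v 0 ∈ h ∨ v (Fin.last k) ∈ h) → ∃ i, e i = h)
    (vv : Fin (k + 1) → V) (ee : Fin k → Finset V)
    (hP : IsBergePath E k vv ee)
    (W : Finset V) (hW : W = Finset.image (fun i : Fin k => vv i.succ) Finset.univ)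
    (i j : Fin k) (hij : i < j)
    (hje : vv j.succ ∈ ee ⟨0, hk⟩ ∩ W)
    (hmeet : ((ee i ∩ ee j) \ W).Nonempty) :
    ∀ h ∈ E, vv i.succ ∈ h → ∃ l, ee l = h :=
  stmt15_general k hk E hterm vv ee hP W hW i j hij hje hmeet
end

section
/- Let H be an r-uniform hypergraph and let P be a Berge path in H with terminal vertex v0. Let 𝒫(P, v0) be the set of all Berge paths Q in H having v0 as a terminal vertex and having the same set of defining vertices and the same set of defining edges as P; for Q ∈ 𝒫(P, v0) let τ(Q) denote the terminal vertex of Q other than v0. Then there exists a nonempty subset 𝒫′ ⊆ 𝒫(P, v0) such that the number of defining edges of P that meet the set τ(𝒫′) = {τ(Q) : Q ∈ 𝒫′} is at most 2·|τ(𝒫′)| − 1. -/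
open Finset Function

section PosaRotation

variable {l : ℕ}

/-- The vertex order `0, …, i, l, l-1, …, i+1` of the rotation at the edge `i`. -/
def posaRotVertex (i : Fin l) (m : Fin (l + 1)) : Fin (l + 1) :=
  if h : (m : ℕ) ≤ i then m else ⟨l + i + 1 - m, by omega⟩

/-- The edge order `0, …, i, l-1, …, i+1` of the rotation at the edge `i`. -/
def posaRotEdge (i : Fin l) (m : Fin l) : Fin l :=
  if h : (m : ℕ) ≤ i then m else ⟨l + i - m, by omega⟩

lemma val_posaRotVertex (i : Fin l) (m : Fin (l + 1)) :
    (posaRotVertex i m : ℕ) = if (m : ℕ) ≤ i then (m : ℕ) else l + i + 1 - m := by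
  unfold posaRotVertex; split_ifs <;> rfl

lemma val_posaRotEdge (i : Fin l) (m : Fin l) :
    (posaRotEdge i m : ℕ) = if (m : ℕ) ≤ i then (m : ℕ) else l + i - m := by
  unfold posaRotEdge; split_ifs <;> rfl

lemma posaRotVertex_involutive (i : Fin l) : Involutive (posaRotVertex i) := fun m => by
  have := m.isLt
  ext; simp only [val_posaRotVertex]; split_ifs <;> omega

lemma posaRotEdge_involutive (i : Fin l) : Involutive (posaRotEdge i) := fun m => by
  have := m.isLt
  ext; simp only [val_posaRotEdge]; split_ifs <;> omega

lemma posaRotVertex_zero (i : Fin l) : posaRotVertex i 0 = 0 := by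
  ext; simp [val_posaRotVertex]

lemma posaRotVertex_last (i : Fin l) : posaRotVertex i (Fin.last l) = i.succ := by
  have := i.isLt
  ext; simp only [val_posaRotVertex, Fin.val_last, Fin.val_succ]; split_ifs <;> omega

lemma posaRotVertex_succ_self (i : Fin l) : posaRotVertex i i.succ = Fin.last l := by
  ext; simp only [val_posaRotVertex, Fin.val_last, Fin.val_succ]; split_ifs <;> omega

lemma posaRotEdge_self (i : Fin l) : posaRotEdge i i = i := by
  ext; simp [val_posaRotEdge]

lemma posaRotVertex_castSucc_of_le {i m : Fin l} (h : m ≤ i) :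
    posaRotVertex i m.castSucc = (posaRotEdge i m).castSucc := by
  ext; simp only [val_posaRotVertex, val_posaRotEdge, Fin.val_castSucc]
  split_ifs <;> omega

lemma posaRotVertex_ends_of_ne {i m : Fin l} (h : m ≠ i) :
    (posaRotVertex i m.castSucc = (posaRotEdge i m).castSucc ∧
        posaRotVertex i m.succ = (posaRotEdge i m).succ) ∨
      (posaRotVertex i m.castSucc = (posaRotEdge i m).succ ∧
        posaRotVertex i m.succ = (posaRotEdge i m).castSucc) := by
  have := m.isLt
  rcases lt_or_gt_of_ne h with h | h
  · left; refine ⟨posaRotVertex_castSucc_of_le h.le, ?_⟩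
    ext; simp only [val_posaRotVertex, val_posaRotEdge, Fin.val_succ]
    split_ifs <;> omega
  · right; constructor <;>
    · ext; simp only [val_posaRotVertex, val_posaRotEdge, Fin.val_succ, Fin.val_castSucc]
      split_ifs <;> omega

lemma posaRot_sym2_of_ne {V : Type*} (w : Fin (l + 1) → V) {i m : Fin l} (h : m ≠ i) :
    s(w (posaRotVertex i m.castSucc), w (posaRotVertex i m.succ)) =
      s(w (posaRotEdge i m).castSucc, w (posaRotEdge i m).succ) := by
  rcases posaRotVertex_ends_of_ne h with ⟨h₁, h₂⟩ | ⟨h₁, h₂⟩ <;> rw [h₁, h₂]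
  exact Sym2.eq_swap

end PosaRotation

section Berge

variable {V : Type*} {E : Finset (Finset V)} {l : ℕ}

lemma IsBergePath.posaRotate [DecidableEq V] {w : Fin (l + 1) → V} {f : Fin l → Finset V}
    (h : IsBergePath E l w f) {i : Fin l} (hi : w (Fin.last l) ∈ f i) :
    IsBergePath E l (w ∘ posaRotVertex i) (f ∘ posaRotEdge i) := by
  obtain ⟨hw, hf, hfE, hinc⟩ := h
  refine ⟨hw.comp (posaRotVertex_involutive i).injective,
    hf.comp (posaRotEdge_involutive i).injective, fun m => hfE _, fun m => ?_⟩
  simp only [comp_apply]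
  by_cases hm : m = i
  · subst hm
    rw [posaRotVertex_castSucc_of_le le_rfl, posaRotVertex_succ_self, posaRotEdge_self]
    exact ⟨(hinc m).1, hi⟩
  · rcases posaRotVertex_ends_of_ne hm with ⟨h₁, h₂⟩ | ⟨h₁, h₂⟩ <;> rw [h₁, h₂]
    exacts [hinc _, (hinc _).symm]

variable (vp : Fin (l + 1) → V) (ep : Fin l → Finset V)

inductive PosaReachable : (Fin (l + 1) → V) → (Fin l → Finset V) → Prop
  | refl : PosaReachable vp ep
  | rotate {w : Fin (l + 1) → V} {f : Fin l → Finset V} (i : Fin l) :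
      PosaReachable w f → w (Fin.last l) ∈ f i →
      PosaReachable (w ∘ posaRotVertex i) (f ∘ posaRotEdge i)

def IsPosaEnd (t : V) : Prop :=
  ∃ w f, PosaReachable vp ep w f ∧ w (Fin.last l) = t

variable {vp ep}

lemma IsPosaEnd.or_of_sym2_eq {x t a b : V} (ht : IsPosaEnd vp ep t) (h : s(x, t) = s(a, b)) :
    IsPosaEnd vp ep a ∨ IsPosaEnd vp ep b := by
  rcases Sym2.mem_iff.1 (h ▸ Sym2.mem_mk_right x t) with rfl | rfl
  exacts [.inl ht, .inr ht]

namespace PosaReachable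

variable {w : Fin (l + 1) → V} {f : Fin l → Finset V}

lemma isBergePath [DecidableEq V] (hP : IsBergePath E l vp ep) (h : PosaReachable vp ep w f) :
    IsBergePath E l w f := by
  induction h with
  | refl => exact hP
  | rotate i _ hi ih => exact ih.posaRotate hi

lemma apply_zero (h : PosaReachable vp ep w f) : w 0 = vp 0 := by
  induction h with
  | refl => rfl
  | rotate i _ _ ih => simp [posaRotVertex_zero, ih]

lemma range_vertex (h : PosaReachable vp ep w f) : Set.range w = Set.range vp := by
  induction h with
  | refl => rfl
  | rotate i _ _ ih => rw [(posaRotVertex_involutive i).surjective.range_comp, ih]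

lemma range_edge (h : PosaReachable vp ep w f) : Set.range f = Set.range ep := by
  induction h with
  | refl => rfl
  | rotate i _ _ ih => rw [(posaRotEdge_involutive i).surjective.range_comp, ih]

lemma isPosaEnd_rotate (h : PosaReachable vp ep w f) {i : Fin l} (hi : w (Fin.last l) ∈ f i) :
    IsPosaEnd vp ep (w i.succ) :=
  ⟨_, _, h.rotate i hi, by simp [posaRotVertex_last]⟩

lemma sym2_eq_or_isPosaEnd [DecidableEq V] (hP : IsBergePath E l vp ep)
    (h : PosaReachable vp ep w f) {i j : Fin l} (hj : f j = ep i) :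
    s(w j.castSucc, w j.succ) = s(vp i.castSucc, vp i.succ) ∨
      IsPosaEnd vp ep (vp i.castSucc) ∨ IsPosaEnd vp ep (vp i.succ) := by
  induction h generalizing j with
  | refl => exact .inl (by rw [hP.2.1 hj])
  | @rotate w f i₀ hr hi ih =>
    rcases ih hj with hpair | hend
    · by_cases hji : j = i₀
      · subst hji
        rw [posaRotEdge_self] at hpair
        exact .inr ((hr.isPosaEnd_rotate hi).or_of_sym2_eq hpair)
      · left
        simpa only [comp_apply, posaRot_sym2_of_ne w hji] using hpair
    · exact .inr hend

end PosaReachable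

lemma IsPosaEnd.isPosaEnd_or_of_mem [DecidableEq V] (hP : IsBergePath E l vp ep) {t : V}
    (ht : IsPosaEnd vp ep t) {i : Fin l} (hti : t ∈ ep i) :
    IsPosaEnd vp ep (vp i.castSucc) ∨ IsPosaEnd vp ep (vp i.succ) := by
  obtain ⟨w, f, hr, rfl⟩ := ht
  obtain ⟨j, hj⟩ : ep i ∈ Set.range f := hr.range_edge ▸ Set.mem_range_self i
  have hend : IsPosaEnd vp ep (w j.succ) := hr.isPosaEnd_rotate (hj ▸ hti)
  rcases hr.sym2_eq_or_isPosaEnd hP hj with hpair | hends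
  exacts [hend.or_of_sym2_eq hpair, hends]

open Classical in
noncomputable def posaEnds [DecidableEq V] (vp : Fin (l + 1) → V) (ep : Fin l → Finset V) :
    Finset V :=
  (univ.filter fun m => IsPosaEnd vp ep (vp m)).image vp

lemma mem_posaEnds [DecidableEq V] {t : V} : t ∈ posaEnds vp ep ↔ IsPosaEnd vp ep t := by
  classical
  refine ⟨fun ht => ?_, fun ht => ?_⟩
  · obtain ⟨m, hm, rfl⟩ := mem_image.1 ht
    exact (mem_filter.1 hm).2
  · obtain ⟨w, f, hr, rfl⟩ := ht
    obtain ⟨m, hm⟩ : w (Fin.last l) ∈ Set.range vp := hr.range_vertex ▸ Set.mem_range_self _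
    exact mem_image.2 ⟨m, mem_filter.2 ⟨mem_univ _, hm ▸ ⟨w, f, hr, rfl⟩⟩, hm⟩

lemma last_mem_posaEnds [DecidableEq V] : vp (Fin.last l) ∈ posaEnds vp ep :=
  mem_posaEnds.2 ⟨vp, ep, .refl, rfl⟩

end Berge

lemma card_filter_castSucc_or_succ_mem_le {V : Type*} [DecidableEq V] {l : ℕ}
    {v : Fin (l + 1) → V} (hv : Injective v) {T : Finset V} (hT : v (Fin.last l) ∈ T) :
    #{i : Fin l | v i.castSucc ∈ T ∨ v i.succ ∈ T} ≤ 2 * #T - 1 := by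
  have hcastSucc : #{i : Fin l | v i.castSucc ∈ T} ≤ #(T.erase (v (Fin.last l))) :=
    card_le_card_of_injOn (fun i => v i.castSucc)
      (fun i hi =>
        mem_erase.2 ⟨fun h => (Fin.castSucc_lt_last i).ne (hv h), (mem_filter.1 hi).2⟩)
      (fun a _ b _ h => Fin.castSucc_injective l (hv h))
  have hsucc : #{i : Fin l | v i.succ ∈ T} ≤ #T :=
    card_le_card_of_injOn (fun i => v i.succ) (fun i hi => (mem_filter.1 hi).2)
      (fun a _ b _ h => Fin.succ_injective l (hv h))
  rw [card_erase_of_mem hT] at hcastSucc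
  have := card_union_le {i : Fin l | v i.castSucc ∈ T} {i : Fin l | v i.succ ∈ T}
  rw [← filter_or] at this
  omega

theorem stmt17_general {V : Type*} [DecidableEq V]
    (E : Finset (Finset V)) (l : ℕ)
    (vp : Fin (l + 1) → V) (ep : Fin l → Finset V)
    (hP : IsBergePath E l vp ep) :
    ∃ T : Finset V, T.Nonempty ∧
      (∀ t ∈ T, ∃ (vq : Fin (l + 1) → V) (eq' : Fin l → Finset V),
        IsBergePath E l vq eq' ∧ vq 0 = vp 0 ∧
        Set.range vq = Set.range vp ∧ Set.range eq' = Set.range ep ∧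
        vq (Fin.last l) = t) ∧
      ((Finset.univ.image ep).filter fun e => (e ∩ T).Nonempty).card ≤ 2 * T.card - 1 := by
  refine ⟨posaEnds vp ep, ⟨_, last_mem_posaEnds⟩, fun t ht => ?_, ?_⟩
  · obtain ⟨w, f, hr, rfl⟩ := mem_posaEnds.1 ht
    exact ⟨w, f, hr.isBergePath hP, hr.apply_zero, hr.range_vertex, hr.range_edge, rfl⟩
  · calc #((univ.image ep).filter fun e => (e ∩ posaEnds vp ep).Nonempty)
        ≤ #{i | (ep i ∩ posaEnds vp ep).Nonempty} := by
          rw [filter_image]; exact card_image_le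
      _ ≤ #{i : Fin l | vp i.castSucc ∈ posaEnds vp ep ∨ vp i.succ ∈ posaEnds vp ep} := by
          refine card_le_card fun i hi => mem_filter.2 ⟨mem_univ _, ?_⟩
          obtain ⟨t, ht⟩ := (mem_filter.1 hi).2
          rw [mem_inter, mem_posaEnds] at ht
          simpa only [mem_posaEnds] using ht.2.isPosaEnd_or_of_mem hP ht.1
      _ ≤ 2 * #(posaEnds vp ep) - 1 := card_filter_castSucc_or_succ_mem_le hP.1 last_mem_posaEnds

/-- Lemma 7: given a Berge path `P` of length `l` with terminal vertex `v0 = vp 0`,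
there is a nonempty set `T` of endpoints of rearrangements of `P` starting at `v0`
(paths with the same defining vertices and edges as `P`) such that the number of
defining edges of `P` meeting `T` is at most `2|T| - 1`. -/
theorem stmt17 {V : Type*} [Fintype V] [DecidableEq V]
    (E : Finset (Finset V)) (l : ℕ)
    (vp : Fin (l + 1) → V) (ep : Fin l → Finset V)
    (hP : IsBergePath E l vp ep) :
    ∃ T : Finset V, T.Nonempty ∧
      (∀ t ∈ T, ∃ (vq : Fin (l + 1) → V) (eq' : Fin l → Finset V),
        IsBergePath E l vq eq' ∧ vq 0 = vp 0 ∧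
        Set.range vq = Set.range vp ∧ Set.range eq' = Set.range ep ∧
        vq (Fin.last l) = t) ∧
      ((Finset.univ.image ep).filter fun e => (e ∩ T).Nonempty).card ≤ 2 * T.card - 1 :=
  stmt17_general E l vp ep hP
end
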